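/- arXiv:2207.08618 — 4 statements merged into one kernel-verified Lean document; each statement's English description precedes it below -/
import Mathlib

section
/- Let $H \in (1/2, 1)$ and $a > 0$. Then there is a constant $C_H$ depending only on $H$ such that for all $t \ge 0$, $\int_0^t \int_0^t |r-w|^{2H-2} e^{-(r+w)a}\,dr\,dw \le C_H (t^{2H}+1) \min(1, a^{-2H})$. -/
open MeasureTheory Set Real intervalIntegral


lemma myII_abs_rpow {q : ℝ} (hq : -1 < q) (a b : ℝ) :
    IntervalIntegrable (fun x : ℝ => |x| ^ q) volume a b := by
  have key : ∀ c : ℝ, 0 ≤ c → IntervalIntegrable (fun x : ℝ => |x| ^ q) volume 0 c := by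
    intro c hc
    have h1 : IntervalIntegrable (fun x : ℝ => x ^ q) volume 0 c := intervalIntegrable_rpow' hq
    rw [intervalIntegrable_iff, uIoc_of_le hc] at h1 ⊢
    exact h1.congr_fun (fun x hx => by rw [abs_of_pos hx.1]) measurableSet_Ioc
  have key2 : ∀ c : ℝ, IntervalIntegrable (fun x : ℝ => |x| ^ q) volume 0 c := by
    intro c
    rcases le_total 0 c with hc | hc
    · exact key c hc
    · have h := key (-c) (by linarith)
      rw [IntervalIntegrable.iff_comp_neg] at h
      simpa using h
  exact (key2 a).symm.trans (key2 b)

lemma myII_abs_sub {q : ℝ} (hq : -1 < q) (c a b : ℝ) :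
    IntervalIntegrable (fun w : ℝ => |c - w| ^ q) volume a b := by
  have h := (myII_abs_rpow hq (c - a) (c - b)).comp_sub_left c
  simpa using h

lemma myIntOn_rpow_exp {q b : ℝ} (hq : -1 < q) (hb : 0 < b) :
    IntegrableOn (fun x : ℝ => x ^ q * Real.exp (-(b * x))) (Ioi (0:ℝ)) := by
  have h0 : IntegrableOn (fun x : ℝ => Real.exp (-x) * x ^ q) (Ioi (0:ℝ)) := by
    have h := Real.GammaIntegral_convergent (by linarith : (0:ℝ) < q + 1)
    simpa using h
  have h1 : IntegrableOn (fun x : ℝ => Real.exp (-(b * x)) * (b * x) ^ q) (Ioi (0:ℝ)) := by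
    have h := (integrableOn_Ioi_comp_mul_left_iff
      (fun x : ℝ => Real.exp (-x) * x ^ q) 0 hb).2 (by simpa using h0)
    simpa using h
  have h2 : IntegrableOn (fun x : ℝ => ((b : ℝ) ^ q)⁻¹ * (Real.exp (-(b * x)) * (b * x) ^ q))
      (Ioi (0:ℝ)) := h1.const_mul ((b : ℝ) ^ q)⁻¹
  refine IntegrableOn.congr_fun h2 (fun x hx => ?_) measurableSet_Ioi
  rw [Real.mul_rpow hb.le (le_of_lt hx)]
  have hbq : (b : ℝ) ^ q ≠ 0 := (Real.rpow_pos_of_pos hb q).ne'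
  field_simp

lemma myExp_integral {b : ℝ} (hb : 0 < b) :
    ∫ x in Ioi (0:ℝ), Real.exp (-(b * x)) = 1 / b := by
  have h := Real.integral_rpow_mul_exp_neg_mul_Ioi one_pos hb
  rw [show (∫ t in Ioi (0:ℝ), t ^ ((1:ℝ) - 1) * Real.exp (-(b * t)))
      = ∫ t in Ioi (0:ℝ), Real.exp (-(b * t)) from
    setIntegral_congr_fun measurableSet_Ioi
      (fun x _ => by rw [sub_self, Real.rpow_zero, one_mul])] at h
  simpa [Real.Gamma_one] using h

lemma myInner1 {q : ℝ} (hq : -1 < q) {a t r : ℝ} (ha : 0 < a) (hr0 : 0 ≤ r) (hrt : r ≤ t) :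
    (∫ w in Icc (0:ℝ) t, |r - w| ^ q * Real.exp (-(r + w) * a))
      ≤ 2 * (t ^ (q+1) / (q+1)) := by
  have ht0 : 0 ≤ t := hr0.trans hrt
  have hq1 : (0:ℝ) < q + 1 := by linarith
  have hcont : Continuous fun w : ℝ => Real.exp (-(r + w) * a) := by continuity
  have hFii : ∀ u v : ℝ, IntervalIntegrable
      (fun w => |r - w| ^ q * Real.exp (-(r + w) * a)) volume u v :=
    fun u v => (myII_abs_sub hq r u v).mul_continuousOn hcont.continuousOn
  have hii_r : IntervalIntegrable (fun w : ℝ => (r - w) ^ q) volume 0 r := by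
    simpa using (intervalIntegrable_rpow' hq (a := r) (b := 0)).comp_sub_left r
  have hii_t : IntervalIntegrable (fun w : ℝ => (w - r) ^ q) volume r t := by
    simpa using (intervalIntegrable_rpow' hq (a := 0) (b := t - r)).comp_sub_right r
  rw [integral_Icc_eq_integral_Ioc, ← intervalIntegral.integral_of_le ht0,
    ← intervalIntegral.integral_add_adjacent_intervals (hFii 0 r) (hFii r t)]
  have p1 : (∫ w in (0:ℝ)..r, |r - w| ^ q * Real.exp (-(r + w) * a))
      ≤ t ^ (q+1) / (q+1) := by
    have e1 : (∫ w in (0:ℝ)..r, |r - w| ^ q * Real.exp (-(r + w) * a))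
        ≤ ∫ w in (0:ℝ)..r, (r - w) ^ q := by
      apply intervalIntegral.integral_mono_on hr0 (hFii 0 r) hii_r
      intro w hw
      rw [abs_of_nonneg (by linarith [hw.2] : (0:ℝ) ≤ r - w)]
      calc (r - w) ^ q * Real.exp (-(r + w) * a)
          ≤ (r - w) ^ q * 1 := by
            apply mul_le_mul_of_nonneg_left _ (Real.rpow_nonneg (by linarith [hw.2]) q)
            refine Real.exp_le_one_iff.mpr ?_
            nlinarith [hw.1, mul_nonneg (by linarith [hw.1] : (0:ℝ) ≤ r + w) ha.le]
        _ = (r - w) ^ q := mul_one _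
    have e2 : (∫ w in (0:ℝ)..r, (r - w) ^ q) = r ^ (q+1) / (q+1) := by
      have h := intervalIntegral.integral_comp_sub_left (a := 0) (b := r) (fun u : ℝ => u ^ q) r
      simp only [sub_self, sub_zero] at h
      rw [h, integral_rpow (Or.inl hq), Real.zero_rpow (by linarith : q + 1 ≠ 0), sub_zero]
    refine e1.trans ?_
    rw [e2]
    exact (div_le_div_iff_of_pos_right hq1).mpr (Real.rpow_le_rpow hr0 hrt (by linarith))
  have p2 : (∫ w in r..t, |r - w| ^ q * Real.exp (-(r + w) * a))
      ≤ t ^ (q+1) / (q+1) := by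
    have e1 : (∫ w in r..t, |r - w| ^ q * Real.exp (-(r + w) * a))
        ≤ ∫ w in r..t, (w - r) ^ q := by
      apply intervalIntegral.integral_mono_on hrt (hFii r t) hii_t
      intro w hw
      rw [abs_of_nonpos (by linarith [hw.1] : r - w ≤ 0), neg_sub]
      calc (w - r) ^ q * Real.exp (-(r + w) * a)
          ≤ (w - r) ^ q * 1 := by
            apply mul_le_mul_of_nonneg_left _ (Real.rpow_nonneg (by linarith [hw.1]) q)
            refine Real.exp_le_one_iff.mpr ?_
            nlinarith [mul_nonneg (by linarith [hw.1, hr0] : (0:ℝ) ≤ r + w) ha.le]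
        _ = (w - r) ^ q := mul_one _
    have e2 : (∫ w in r..t, (w - r) ^ q) = (t - r) ^ (q+1) / (q+1) := by
      have h := intervalIntegral.integral_comp_sub_right (a := r) (b := t) (fun u : ℝ => u ^ q) r
      simp only [sub_self] at h
      rw [h, integral_rpow (Or.inl hq), Real.zero_rpow (by linarith : q + 1 ≠ 0), sub_zero]
    refine e1.trans ?_
    rw [e2]
    exact (div_le_div_iff_of_pos_right hq1).mpr
      (Real.rpow_le_rpow (by linarith) (by linarith) (by linarith))
  linarith

lemma myInner2 {q : ℝ} (hq : -1 < q) {a t r : ℝ} (ha : 0 < a) (hr0 : 0 ≤ r) (hrt : r ≤ t) :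
    (∫ w in Icc (0:ℝ) t, |r - w| ^ q * Real.exp (-(r + w) * a))
      ≤ (1/(q+1)) * (r ^ (q+1) * Real.exp (-(a * r)))
        + ((1/a) ^ (q+1) * Real.Gamma (q+1)) * Real.exp (-(2*a*r)) := by
  have ht0 : 0 ≤ t := hr0.trans hrt
  have hq1 : (0:ℝ) < q + 1 := by linarith
  have hcont : Continuous fun w : ℝ => Real.exp (-(r + w) * a) := by continuity
  have hFii : ∀ u v : ℝ, IntervalIntegrable
      (fun w => |r - w| ^ q * Real.exp (-(r + w) * a)) volume u v :=
    fun u v => (myII_abs_sub hq r u v).mul_continuousOn hcont.continuousOn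
  have hii_r : IntervalIntegrable (fun w : ℝ => (r - w) ^ q) volume 0 r := by
    simpa using (intervalIntegrable_rpow' hq (a := r) (b := 0)).comp_sub_left r
  rw [integral_Icc_eq_integral_Ioc, ← intervalIntegral.integral_of_le ht0,
    ← intervalIntegral.integral_add_adjacent_intervals (hFii 0 r) (hFii r t)]
  have p1 : (∫ w in (0:ℝ)..r, |r - w| ^ q * Real.exp (-(r + w) * a))
      ≤ (1/(q+1)) * (r ^ (q+1) * Real.exp (-(a * r))) := by
    have e1 : (∫ w in (0:ℝ)..r, |r - w| ^ q * Real.exp (-(r + w) * a))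
        ≤ ∫ w in (0:ℝ)..r, (r - w) ^ q * Real.exp (-(a * r)) := by
      apply intervalIntegral.integral_mono_on hr0 (hFii 0 r) (hii_r.mul_const _)
      intro w hw
      rw [abs_of_nonneg (by linarith [hw.2] : (0:ℝ) ≤ r - w)]
      apply mul_le_mul_of_nonneg_left _ (Real.rpow_nonneg (by linarith [hw.2]) q)
      apply Real.exp_le_exp.mpr
      nlinarith [mul_nonneg hw.1 ha.le]
    have e2 : (∫ w in (0:ℝ)..r, (r - w) ^ q * Real.exp (-(a * r)))
        = (r ^ (q+1) / (q+1)) * Real.exp (-(a * r)) := by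
      rw [intervalIntegral.integral_mul_const]
      congr 1
      have h := intervalIntegral.integral_comp_sub_left (a := 0) (b := r) (fun u : ℝ => u ^ q) r
      simp only [sub_self, sub_zero] at h
      rw [h, integral_rpow (Or.inl hq), Real.zero_rpow (by linarith : q + 1 ≠ 0), sub_zero]
    refine e1.trans ?_
    rw [e2]
    ring_nf
    exact le_refl _
  have p2 : (∫ w in r..t, |r - w| ^ q * Real.exp (-(r + w) * a))
      ≤ ((1/a) ^ (q+1) * Real.Gamma (q+1)) * Real.exp (-(2*a*r)) := by
    have e1 : (∫ w in r..t, |r - w| ^ q * Real.exp (-(r + w) * a))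
        = (∫ w in r..t, (w - r) ^ q * Real.exp (-(a * (w - r)))) * Real.exp (-(2*a*r)) := by
      rw [← intervalIntegral.integral_mul_const]
      apply intervalIntegral.integral_congr
      intro w hw
      rw [uIcc_of_le hrt] at hw
      show |r - w| ^ q * Real.exp (-(r + w) * a)
          = (w - r) ^ q * Real.exp (-(a * (w - r))) * Real.exp (-(2*a*r))
      rw [abs_of_nonpos (by linarith [hw.1] : r - w ≤ 0), neg_sub, mul_assoc, ← Real.exp_add]
      congr 2
      ring
    rw [e1]
    apply mul_le_mul_of_nonneg_right _ (Real.exp_nonneg _)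
    have e2 : (∫ w in r..t, (w - r) ^ q * Real.exp (-(a * (w - r))))
        = ∫ v in (0:ℝ)..(t-r), v ^ q * Real.exp (-(a * v)) := by
      have h := intervalIntegral.integral_comp_sub_right (a := r) (b := t)
        (fun v : ℝ => v ^ q * Real.exp (-(a * v))) r
      simp only [sub_self] at h
      exact h
    rw [e2, intervalIntegral.integral_of_le (by linarith : (0:ℝ) ≤ t - r)]
    have hmono : (∫ v in Ioc (0:ℝ) (t-r), v ^ q * Real.exp (-(a * v)))
        ≤ ∫ v in Ioi (0:ℝ), v ^ q * Real.exp (-(a * v)) := by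
      apply setIntegral_mono_set (myIntOn_rpow_exp hq ha)
      · refine (ae_restrict_iff' measurableSet_Ioi).2 (Filter.Eventually.of_forall ?_)
        intro x hx
        have : (0:ℝ) < x := hx
        positivity
      · exact HasSubset.Subset.eventuallyLE Ioc_subset_Ioi_self
    refine hmono.trans ?_
    have hval := Real.integral_rpow_mul_exp_neg_mul_Ioi (show (0:ℝ) < q + 1 by linarith) ha
    rw [show q + 1 - 1 = q by ring] at hval
    rw [hval]
  linarith

lemma myNonnegInner {q a t : ℝ} (r : ℝ) :
    0 ≤ ∫ w in Icc (0:ℝ) t, |r - w| ^ q * Real.exp (-(r + w) * a) :=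
  setIntegral_nonneg measurableSet_Icc fun w _ => by positivity

lemma myOuter1 {q : ℝ} (hq : -1 < q) {a t : ℝ} (ha : 0 < a) (ht : 0 ≤ t) :
    (∫ r in Icc (0:ℝ) t, ∫ w in Icc (0:ℝ) t, |r - w| ^ q * Real.exp (-(r + w) * a))
      ≤ t * (2 * (t ^ (q+1) / (q+1))) := by
  have h1 : (∫ r in Icc (0:ℝ) t, ∫ w in Icc (0:ℝ) t, |r - w| ^ q * Real.exp (-(r + w) * a))
      ≤ ∫ _r in Icc (0:ℝ) t, (2 * (t ^ (q+1) / (q+1)) : ℝ) := by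
    apply integral_mono_of_nonneg
    · exact Filter.Eventually.of_forall fun r => myNonnegInner r
    · exact integrableOn_const (by rw [Real.volume_Icc]; exact ENNReal.ofReal_ne_top)
    · exact (ae_restrict_iff' measurableSet_Icc).2
        (Filter.Eventually.of_forall fun r hr => myInner1 hq ha hr.1 hr.2)
  refine h1.trans_eq ?_
  rw [setIntegral_const, measureReal_def, Real.volume_Icc, smul_eq_mul, sub_zero, ENNReal.toReal_ofReal ht]

lemma myOuter2 {q : ℝ} (hq : -1 < q) {a t : ℝ} (ha : 0 < a) (ht : 0 ≤ t) :
    (∫ r in Icc (0:ℝ) t, ∫ w in Icc (0:ℝ) t, |r - w| ^ q * Real.exp (-(r + w) * a))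
      ≤ (1/(q+1)) * ((1/a) ^ (q+2) * Real.Gamma (q+2))
        + ((1/a) ^ (q+1) * Real.Gamma (q+1)) * (1/(2*a)) := by
  have hq1 : (0:ℝ) < q + 1 := by linarith
  set M : ℝ → ℝ := fun r => (1/(q+1)) * (r ^ (q+1) * Real.exp (-(a * r)))
    + ((1/a) ^ (q+1) * Real.Gamma (q+1)) * Real.exp (-(2*a*r)) with hM
  have hMnn : ∀ r : ℝ, 0 ≤ r → 0 ≤ M r := by
    intro r hr
    have hΓ : 0 ≤ Real.Gamma (q+1) := (Real.Gamma_pos_of_pos hq1).le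
    have h1 : (0:ℝ) ≤ 1/(q+1) := by positivity
    apply add_nonneg
    · exact mul_nonneg h1 (mul_nonneg (Real.rpow_nonneg hr _) (Real.exp_nonneg _))
    · exact mul_nonneg (mul_nonneg (Real.rpow_nonneg (by positivity) _) hΓ) (Real.exp_nonneg _)
  have hint1 : IntegrableOn (fun r : ℝ => (1/(q+1)) * (r ^ (q+1) * Real.exp (-(a * r))))
      (Ioi (0:ℝ)) := (myIntOn_rpow_exp (by linarith) ha).const_mul _
  have hint2 : IntegrableOn
      (fun r : ℝ => ((1/a) ^ (q+1) * Real.Gamma (q+1)) * Real.exp (-(2*a*r))) (Ioi (0:ℝ)) := by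
    have h := (exp_neg_integrableOn_Ioi (0:ℝ) (show (0:ℝ) < 2*a by linarith)).const_mul
      ((1/a) ^ (q+1) * Real.Gamma (q+1))
    refine IntegrableOn.congr_fun h (fun x _ => ?_) measurableSet_Ioi
    rw [neg_mul]
  have hMint : IntegrableOn M (Ioi (0:ℝ)) := hint1.add hint2
  have hMcont : Continuous M := by
    have h1 : Continuous fun r : ℝ => r ^ (q+1) := Real.continuous_rpow_const hq1.le
    have h2 : Continuous fun r : ℝ => Real.exp (-(a * r)) := by continuity
    have h3 : Continuous fun r : ℝ => Real.exp (-(2*a*r)) := by continuity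
    exact (continuous_const.mul (h1.mul h2)).add (continuous_const.mul h3)
  have h1 : (∫ r in Icc (0:ℝ) t, ∫ w in Icc (0:ℝ) t, |r - w| ^ q * Real.exp (-(r + w) * a))
      ≤ ∫ r in Icc (0:ℝ) t, M r := by
    apply integral_mono_of_nonneg
    · exact Filter.Eventually.of_forall fun r => myNonnegInner r
    · exact hMcont.integrableOn_Icc
    · exact (ae_restrict_iff' measurableSet_Icc).2
        (Filter.Eventually.of_forall fun r hr => myInner2 hq ha hr.1 hr.2)
  have h2 : (∫ r in Icc (0:ℝ) t, M r) ≤ ∫ r in Ici (0:ℝ), M r := by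
    refine setIntegral_mono_set ?_ ?_ (HasSubset.Subset.eventuallyLE Icc_subset_Ici_self)
    · rw [integrableOn_Ici_iff_integrableOn_Ioi]; exact hMint
    · exact (ae_restrict_iff' measurableSet_Ici).2
        (Filter.Eventually.of_forall fun x hx => hMnn x hx)
  have h3 : (∫ r in Ici (0:ℝ), M r) = ∫ r in Ioi (0:ℝ), M r := integral_Ici_eq_integral_Ioi
  have h4 : (∫ r in Ioi (0:ℝ), M r)
      = (1/(q+1)) * (∫ r in Ioi (0:ℝ), r ^ (q+1) * Real.exp (-(a * r)))
        + ((1/a) ^ (q+1) * Real.Gamma (q+1)) * (∫ r in Ioi (0:ℝ), Real.exp (-(2*a*r))) := by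
    rw [hM, integral_add hint1 hint2, MeasureTheory.integral_const_mul, MeasureTheory.integral_const_mul]
  have v1 : (∫ r in Ioi (0:ℝ), r ^ (q+1) * Real.exp (-(a * r)))
      = (1/a) ^ (q+2) * Real.Gamma (q+2) := by
    have hval := Real.integral_rpow_mul_exp_neg_mul_Ioi (show (0:ℝ) < q+2 by linarith) ha
    rw [show q+2-1 = q+1 by ring] at hval
    exact hval
  have v2 : (∫ r in Ioi (0:ℝ), Real.exp (-(2*a*r))) = 1/(2*a) :=
    myExp_integral (by linarith)
  calc (∫ r in Icc (0:ℝ) t, ∫ w in Icc (0:ℝ) t, |r - w| ^ q * Real.exp (-(r + w) * a))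
      ≤ ∫ r in Icc (0:ℝ) t, M r := h1
    _ ≤ ∫ r in Ici (0:ℝ), M r := h2
    _ = ∫ r in Ioi (0:ℝ), M r := h3
    _ = (1/(q+1)) * ((1/a) ^ (q+2) * Real.Gamma (q+2))
        + ((1/a) ^ (q+1) * Real.Gamma (q+1)) * (1/(2*a)) := by rw [h4, v1, v2]

theorem stmt0 (H : ℝ) (hH1 : 1/2 < H) (hH2 : H < 1) :
    ∃ C > 0, ∀ a > (0:ℝ), ∀ t ≥ (0:ℝ),
      (∫ r in Icc (0:ℝ) t, ∫ w in Icc (0:ℝ) t,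
          |r - w| ^ (2*H - 2) * Real.exp (-(r + w) * a))
        ≤ C * (t ^ (2*H) + 1) * min 1 (a ^ (-(2*H))) := by
  have hq : (-1:ℝ) < 2*H - 2 := by linarith
  have hp : (0:ℝ) < 2*H - 2 + 1 := by linarith
  have hΓ1 : 0 < Real.Gamma (2*H - 2 + 1) := Real.Gamma_pos_of_pos hp
  have hΓ2 : 0 < Real.Gamma (2*H - 2 + 2) := Real.Gamma_pos_of_pos (by linarith)
  have h2p : (0:ℝ) < 2 / (2*H - 2 + 1) := div_pos two_pos hp
  have h1p : (0:ℝ) < 1 / (2*H - 2 + 1) := div_pos one_pos hp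
  refine ⟨2 / (2*H - 2 + 1) + (1/(2*H - 2 + 1)) * Real.Gamma (2*H - 2 + 2)
      + Real.Gamma (2*H - 2 + 1) + 1, ?_, ?_⟩
  · nlinarith [mul_pos h1p hΓ2]
  intro a ha t ht
  have hCpos : (0:ℝ) < 2 / (2*H - 2 + 1) + (1/(2*H - 2 + 1)) * Real.Gamma (2*H - 2 + 2)
      + Real.Gamma (2*H - 2 + 1) + 1 := by nlinarith [mul_pos h1p hΓ2]
  have htp : 0 ≤ t ^ (2*H) := Real.rpow_nonneg ht _
  rcases le_total a 1 with hA | hA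
  · have hmin : min 1 (a ^ (-(2*H))) = 1 :=
      min_eq_left (Real.one_le_rpow_of_pos_of_le_one_of_nonpos ha hA (by linarith))
    rw [hmin, mul_one]
    refine (myOuter1 hq ha ht).trans ?_
    rcases eq_or_lt_of_le ht with h0 | h0
    · rw [← h0, zero_mul]
      positivity
    · have key : t ^ (2*H - 2 + 1) * t = t ^ (2*H) := by
        rw [← Real.rpow_add_one h0.ne' (2*H - 2 + 1)]
        congr 1
        ring
      have lhs_eq : t * (2 * (t ^ (2*H - 2 + 1) / (2*H - 2 + 1)))
          = 2 / (2*H - 2 + 1) * t ^ (2*H) := by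
        rw [← key]; ring
      rw [lhs_eq]
      nlinarith [mul_nonneg (mul_pos h1p hΓ2).le htp, mul_nonneg hΓ1.le htp, htp]
  · have hmin : min 1 (a ^ (-(2*H))) = a ^ (-(2*H)) :=
      min_eq_right (Real.rpow_le_one_of_one_le_of_nonpos hA (by linarith))
    rw [hmin]
    refine (myOuter2 hq ha ht).trans ?_
    have hX : 0 ≤ a ^ (-(2*H)) := Real.rpow_nonneg ha.le _
    have e1 : (1/a) ^ (2*H - 2 + 2) = a ^ (-(2*H)) := by
      rw [show (2*H - 2 + 2) = 2*H by ring, one_div, Real.inv_rpow ha.le,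
        ← Real.rpow_neg ha.le]
    have e2 : (1/a) ^ (2*H - 2 + 1) * (1/(2*a)) ≤ a ^ (-(2*H)) := by
      have h1 : (1:ℝ)/(2*a) ≤ 1/a := one_div_le_one_div_of_le ha (by linarith)
      have h2 : (1/a) ^ (2*H - 2 + 1) * (1/a) = a ^ (-(2*H)) := by
        rw [← Real.rpow_add_one (by positivity : (1:ℝ)/a ≠ 0) (2*H - 2 + 1),
          show (2*H - 2 + 1 + 1) = 2*H by ring, one_div, Real.inv_rpow ha.le,
          ← Real.rpow_neg ha.le]
      calc (1/a) ^ (2*H - 2 + 1) * (1/(2*a))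
          ≤ (1/a) ^ (2*H - 2 + 1) * (1/a) :=
            mul_le_mul_of_nonneg_left h1 (Real.rpow_nonneg (by positivity) _)
        _ = a ^ (-(2*H)) := h2
    calc (1/(2*H - 2 + 1)) * ((1/a) ^ (2*H - 2 + 2) * Real.Gamma (2*H - 2 + 2))
          + ((1/a) ^ (2*H - 2 + 1) * Real.Gamma (2*H - 2 + 1)) * (1/(2*a))
        = (1/(2*H - 2 + 1)) * Real.Gamma (2*H - 2 + 2) * ((1/a) ^ (2*H - 2 + 2))
          + Real.Gamma (2*H - 2 + 1) * ((1/a) ^ (2*H - 2 + 1) * (1/(2*a))) := by ring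
      _ ≤ (1/(2*H - 2 + 1)) * Real.Gamma (2*H - 2 + 2) * (a ^ (-(2*H)))
          + Real.Gamma (2*H - 2 + 1) * (a ^ (-(2*H))) := by
          apply add_le_add
          · exact le_of_eq (by rw [e1])
          · exact mul_le_mul_of_nonneg_left e2 hΓ1.le
      _ = ((1/(2*H - 2 + 1)) * Real.Gamma (2*H - 2 + 2) + Real.Gamma (2*H - 2 + 1))
            * a ^ (-(2*H)) := by ring
      _ ≤ ((2 / (2*H - 2 + 1) + (1/(2*H - 2 + 1)) * Real.Gamma (2*H - 2 + 2)
            + Real.Gamma (2*H - 2 + 1) + 1) * (t ^ (2*H) + 1)) * a ^ (-(2*H)) := by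
          apply mul_le_mul_of_nonneg_right _ hX
          nlinarith [mul_nonneg hCpos.le htp]
      _ = (2 / (2*H - 2 + 1) + (1/(2*H - 2 + 1)) * Real.Gamma (2*H - 2 + 2)
            + Real.Gamma (2*H - 2 + 1) + 1) * (t ^ (2*H) + 1) * a ^ (-(2*H)) := by ring
end

section
/- Let $H \in (1/2,1)$ and $a > 0$. Then for all $t \ge 0$, $\int_0^t \int_0^t |r-w|^{2H-2} e^{-(r+w)a}\,dr\,dw \ge \frac{1}{4} (\min(t, 1/2))^{2H} \min(1, a^{-2H})$. -/
open MeasureTheory Set Real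

lemma absRpow_ii {p : ℝ} (hp : -1 < p) (c d : ℝ) :
    IntervalIntegrable (fun x : ℝ => |x| ^ p) volume c d := by
  have base : ∀ e : ℝ, 0 ≤ e → IntervalIntegrable (fun x : ℝ => |x| ^ p) volume 0 e := by
    intro e he
    have h1 := intervalIntegral.intervalIntegrable_rpow' (a := 0) (b := e) hp
    rw [intervalIntegrable_iff, uIoc_of_le he] at h1 ⊢
    exact h1.congr_fun (fun x hx => by rw [abs_of_pos hx.1]) measurableSet_Ioc
  have all0 : ∀ e : ℝ, IntervalIntegrable (fun x : ℝ => |x| ^ p) volume 0 e := by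
    intro e
    rcases le_total 0 e with he | he
    · exact base e he
    · have := (base (-e) (by linarith)).comp_sub_left 0
      simpa using this
  exact (all0 c).symm.trans (all0 d)

lemma shift_ii {p : ℝ} (hp : -1 < p) (r c d : ℝ) :
    IntervalIntegrable (fun w : ℝ => |r - w| ^ p) volume c d := by
  have := (absRpow_ii hp (r - c) (r - d)).comp_sub_left r
  simpa using this

lemma shift_iOn {p : ℝ} (hp : -1 < p) (r t : ℝ) (ht : 0 ≤ t) :
    IntegrableOn (fun w : ℝ => |r - w| ^ p) (Icc 0 t) := by
  have h := shift_ii hp r 0 t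
  rw [intervalIntegrable_iff, uIoc_of_le ht] at h
  rw [integrableOn_Icc_iff_integrableOn_Ioc]
  exact h

lemma inner_val {p : ℝ} (hp : -1 < p) (t r : ℝ) (hr : r ∈ Icc (0:ℝ) t) :
    ∫ w in Icc (0:ℝ) t, |r - w| ^ p ≤ 2 * t ^ (p+1) / (p+1) := by
  obtain ⟨hr0, hrt⟩ := hr
  have ht : (0:ℝ) ≤ t := le_trans hr0 hrt
  have hp1 : 0 < p + 1 := by linarith
  rw [integral_Icc_eq_integral_Ioc, ← intervalIntegral.integral_of_le ht]
  have h1 : ∫ w in (0:ℝ)..r, |r - w| ^ p = r ^ (p+1) / (p+1) := by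
    rw [intervalIntegral.integral_congr (g := fun w => (r - w) ^ p)
      (fun x hx => by
        rw [uIcc_of_le hr0] at hx
        rw [abs_of_nonneg (by linarith [hx.2] : (0:ℝ) ≤ r - x)]),
      intervalIntegral.integral_comp_sub_left (fun u => u ^ p) r, sub_self, sub_zero,
      integral_rpow (Or.inl hp)]
    rw [Real.zero_rpow (by linarith : p + 1 ≠ 0), sub_zero]
  have h2 : ∫ w in r..t, |r - w| ^ p = (t - r) ^ (p+1) / (p+1) := by
    rw [intervalIntegral.integral_congr (g := fun w => (w - r) ^ p)
      (fun x hx => by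
        rw [uIcc_of_le hrt] at hx
        rw [abs_of_nonpos (by linarith [hx.1] : r - x ≤ 0), neg_sub]),
      intervalIntegral.integral_comp_sub_right (fun u => u ^ p) r, sub_self,
      integral_rpow (Or.inl hp)]
    rw [Real.zero_rpow (by linarith : p + 1 ≠ 0), sub_zero]
  rw [← intervalIntegral.integral_add_adjacent_intervals (b := r)
    (shift_ii hp r 0 r) (shift_ii hp r r t), h1, h2]
  have b1 : r ^ (p+1) ≤ t ^ (p+1) := Real.rpow_le_rpow hr0 hrt hp1.le
  have b2 : (t - r) ^ (p+1) ≤ t ^ (p+1) :=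
    Real.rpow_le_rpow (by linarith) (by linarith) hp1.le
  rw [← add_div]
  gcongr
  linarith

lemma meas_absRpow (c : ℝ) : Measurable (fun x : ℝ => |x| ^ c) := by
  have he : (fun x : ℝ => |x| ^ c)
      = fun x => if x = 0 then (0:ℝ) ^ c else Real.exp (Real.log |x| * c) := by
    funext x
    by_cases hx : x = 0
    · simp [hx]
    · rw [if_neg hx, Real.rpow_def_of_pos (abs_pos.mpr hx)]
  rw [he]
  exact Measurable.ite (measurableSet_singleton (0:ℝ) : MeasurableSet {x : ℝ | x = 0})
    measurable_const ((Real.measurable_log.comp measurable_abs).mul_const c).exp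

theorem stmt1 (H : ℝ) (hH1 : 1/2 < H) (hH2 : H < 1) (a : ℝ) (ha : 0 < a) :
    ∀ t ≥ (0:ℝ),
      (1/4) * (min t (1/2)) ^ (2*H) * min 1 (a ^ (-(2*H)))
        ≤ ∫ r in Icc (0:ℝ) t, ∫ w in Icc (0:ℝ) t,
            |r - w| ^ (2*H - 2) * Real.exp (-(r + w) * a) := by
  intro t ht
  have h2H : (0:ℝ) < 2*H := by linarith
  have hp : (-1:ℝ) < 2*H - 2 := by linarith
  have hq : (0:ℝ) < 2*H - 1 := by linarith
  -- nonnegativity of the integrand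
  have hfnn : ∀ r w : ℝ, 0 ≤ |r - w| ^ (2*H - 2) * Real.exp (-(r + w) * a) :=
    fun r w => mul_nonneg (Real.rpow_nonneg (abs_nonneg _) _) (Real.exp_nonneg _)
  -- inner integral and its nonnegativity
  set F : ℝ → ℝ := fun r => ∫ w in Icc (0:ℝ) t, |r - w| ^ (2*H - 2) * Real.exp (-(r + w) * a)
    with hF_def
  have hF_nonneg : ∀ r, 0 ≤ F r := fun r =>
    setIntegral_nonneg measurableSet_Icc fun w _ => hfnn r w
  rcases eq_or_lt_of_le ht with h0 | h0
  · -- trivial case t = 0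
    have hmin : min t (1/2) = 0 := by rw [← h0]; norm_num
    rw [hmin, Real.zero_rpow (ne_of_gt h2H), mul_zero, zero_mul]
    exact setIntegral_nonneg measurableSet_Icc fun r _ => hF_nonneg r
  -- main case 0 < t
  set s : ℝ := min t (1/(2*a)) with hs_def
  have hs_pos : 0 < s := lt_min h0 (by positivity)
  have hst : s ≤ t := min_le_left _ _
  have hsub : Icc (0:ℝ) s ⊆ Icc 0 t := Icc_subset_Icc_right hst
  have hsa : s * a ≤ 1/2 := by
    have h1 : s ≤ 1/(2*a) := min_le_right _ _
    have := mul_le_mul_of_nonneg_right h1 ha.le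
    calc s * a ≤ (1/(2*a)) * a := this
    _ = 1/2 := by field_simp
  -- measurability of the two-variable function
  have hmul_meas :
      Measurable (fun q : ℝ × ℝ => |q.1 - q.2| ^ (2*H-2) * Real.exp (-(q.1+q.2)*a)) :=
    ((meas_absRpow (2*H-2)).comp (measurable_fst.sub measurable_snd)).mul
      (((measurable_fst.add measurable_snd).neg.mul_const a).exp)
  -- inner integrability
  have hinner_int : ∀ r : ℝ,
      IntegrableOn (fun w => |r - w| ^ (2*H-2) * Real.exp (-(r+w)*a)) (Icc 0 t) := by
    intro r
    have h1 : Integrable (fun w => Real.exp (-(r+w)*a) * |r - w| ^ (2*H-2))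
        (volume.restrict (Icc 0 t)) := by
      apply Integrable.bdd_mul (c := Real.exp (|r| * a)) (shift_iOn hp r t ht)
      · exact (Continuous.aestronglyMeasurable (by fun_prop))
      · filter_upwards [ae_restrict_mem measurableSet_Icc] with w hw
        rw [Real.norm_eq_abs, abs_of_nonneg (Real.exp_nonneg _), Real.exp_le_exp]
        nlinarith [abs_nonneg r, le_abs_self r, neg_abs_le r, hw.1, ha.le,
          mul_le_mul_of_nonneg_right (neg_abs_le r) ha.le]
    exact h1.congr (Filter.Eventually.of_forall fun w => mul_comm _ _)
  -- uniform bound on F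
  have hF_bound : ∀ r ∈ Icc (0:ℝ) t, F r ≤ 2 * t ^ (2*H-1) / (2*H-1) := by
    intro r hr
    have step : F r ≤ ∫ w in Icc (0:ℝ) t, |r - w| ^ (2*H-2) := by
      apply setIntegral_mono_on (hinner_int r) (shift_iOn hp r t ht) measurableSet_Icc
      intro w hw
      have hex : Real.exp (-(r+w)*a) ≤ 1 := by
        rw [Real.exp_le_one_iff]
        nlinarith [hr.1, hw.1, ha.le]
      exact mul_le_of_le_one_right (Real.rpow_nonneg (abs_nonneg _) _) hex
    have hval := inner_val hp t r hr
    have he : (2*H-2) + 1 = 2*H-1 := by ring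
    rw [he] at hval
    exact step.trans hval
  -- F is strongly measurable
  have hF_meas : StronglyMeasurable F :=
    (hmul_meas.stronglyMeasurable).integral_prod_right'
  -- F is integrable on Icc 0 t
  have hF_int : IntegrableOn F (Icc 0 t) := by
    apply Integrable.mono' (g := fun _ => 2 * t ^ (2*H-1) / (2*H-1))
      (integrableOn_const measure_Icc_lt_top.ne)
      hF_meas.aestronglyMeasurable
    filter_upwards [ae_restrict_mem measurableSet_Icc] with r hr
    rw [Real.norm_eq_abs, abs_of_nonneg (hF_nonneg r)]
    exact hF_bound r hr
  -- constant lower bound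
  set cst : ℝ := s ^ (2*H-2) * Real.exp (-1) with hcst_def
  have hcst_nonneg : 0 ≤ cst := mul_nonneg (Real.rpow_nonneg hs_pos.le _) (Real.exp_nonneg _)
  -- the inner integral lower bound for r ∈ [0, s]
  have hcs : ∀ r ∈ Icc (0:ℝ) s, s * cst ≤ F r := by
    intro r hr
    have hstep1 : ∫ w in Icc (0:ℝ) s, (fun _ : ℝ => cst) w
        ≤ ∫ w in Icc (0:ℝ) s, |r - w| ^ (2*H-2) * Real.exp (-(r+w)*a) := by
      apply setIntegral_mono_on_ae (integrableOn_const measure_Icc_lt_top.ne)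
        ((hinner_int r).mono_set hsub) measurableSet_Icc
      have hne : ∀ᵐ w : ℝ, w ≠ r := by
        rw [ae_iff]
        have : {w : ℝ | ¬ w ≠ r} = {r} := by ext w; simp
        rw [this]
        exact Real.volume_singleton
      filter_upwards [hne] with w hwr hw
      have hx : 0 < |r - w| := abs_pos.mpr (sub_ne_zero.mpr (Ne.symm hwr))
      have hxs : |r - w| ≤ s := abs_le.mpr ⟨by linarith [hr.1, hw.2], by linarith [hr.2, hw.1]⟩
      have hrp : s ^ (2*H-2) ≤ |r - w| ^ (2*H-2) :=
        Real.rpow_le_rpow_of_nonpos hx hxs (by linarith)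
      have hexp : Real.exp (-1) ≤ Real.exp (-(r+w)*a) := by
        rw [Real.exp_le_exp]
        nlinarith [hr.1, hr.2, hw.1, hw.2, hsa, ha.le,
          mul_le_mul_of_nonneg_right (by linarith [hr.2, hw.2] : r + w ≤ 2*s) ha.le]
      exact mul_le_mul hrp hexp (Real.exp_nonneg _) (Real.rpow_nonneg (abs_nonneg _) _)
    have hstep2 : ∫ w in Icc (0:ℝ) s, |r - w| ^ (2*H-2) * Real.exp (-(r+w)*a) ≤ F r :=
      setIntegral_mono_set (hinner_int r)
        (Filter.Eventually.of_forall fun w => hfnn r w) (hsub.eventuallyLE)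
    have hconst : ∫ w in Icc (0:ℝ) s, (fun _ : ℝ => cst) w = s * cst := by
      rw [setIntegral_const, Real.volume_real_Icc_of_le hs_pos.le, sub_zero,
        smul_eq_mul]
    linarith [hstep1, hstep2, hconst.ge, hconst.le]
  -- assemble the outer bound
  have main : s * (s * cst) ≤ ∫ r in Icc (0:ℝ) t, F r := by
    have h1 : ∫ r in Icc (0:ℝ) s, (fun _ : ℝ => s * cst) r = s * (s * cst) := by
      rw [setIntegral_const, Real.volume_real_Icc_of_le hs_pos.le, sub_zero,
        smul_eq_mul]
    have h2 : ∫ r in Icc (0:ℝ) s, (fun _ : ℝ => s * cst) r ≤ ∫ r in Icc (0:ℝ) s, F r :=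
      setIntegral_mono_on (integrableOn_const measure_Icc_lt_top.ne)
        (hF_int.mono_set hsub) measurableSet_Icc hcs
    have h3 : ∫ r in Icc (0:ℝ) s, F r ≤ ∫ r in Icc (0:ℝ) t, F r :=
      setIntegral_mono_set hF_int
        (Filter.Eventually.of_forall fun r => hF_nonneg r) (hsub.eventuallyLE)
    linarith
  -- final arithmetic
  have hm_nonneg : (0:ℝ) ≤ min 1 (1/a) := le_min zero_le_one (by positivity)
  have key1 : min t (1/2) * min 1 (1/a) ≤ s := by
    apply le_min
    · calc min t (1/2) * min 1 (1/a) ≤ t * 1 :=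
            mul_le_mul (min_le_left _ _) (min_le_left _ _) hm_nonneg ht
      _ = t := mul_one t
    · calc min t (1/2) * min 1 (1/a) ≤ (1/2) * (1/a) :=
            mul_le_mul (min_le_right _ _) (min_le_right _ _) hm_nonneg (by norm_num)
      _ = 1/(2*a) := by ring
  have key2 : min 1 (a ^ (-(2*H))) ≤ (min 1 (1/a)) ^ (2*H) := by
    rcases min_cases (1:ℝ) (1/a) with ⟨h1, _⟩ | ⟨h1, _⟩
    · rw [h1, Real.one_rpow]; exact min_le_left _ _
    · rw [h1, one_div, Real.inv_rpow ha.le, ← Real.rpow_neg ha.le]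
      exact min_le_right _ _
  have key3 : (min t (1/2)) ^ (2*H) * min 1 (a ^ (-(2*H))) ≤ s ^ (2*H) := by
    have hT : (0:ℝ) ≤ min t (1/2) := le_min ht (by norm_num)
    calc (min t (1/2)) ^ (2*H) * min 1 (a ^ (-(2*H)))
        ≤ (min t (1/2)) ^ (2*H) * (min 1 (1/a)) ^ (2*H) :=
          mul_le_mul_of_nonneg_left key2 (Real.rpow_nonneg hT _)
      _ = (min t (1/2) * min 1 (1/a)) ^ (2*H) := (Real.mul_rpow hT hm_nonneg).symm
      _ ≤ s ^ (2*H) := Real.rpow_le_rpow (mul_nonneg hT hm_nonneg) key1 h2H.le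
  have key4 : (1:ℝ)/4 ≤ Real.exp (-1) := by
    rw [Real.exp_neg]
    have h4 : Real.exp 1 ≤ 4 := le_trans Real.exp_one_lt_d9.le (by norm_num)
    have hx : Real.exp 1 * (Real.exp 1)⁻¹ = 1 := mul_inv_cancel₀ (ne_of_gt (Real.exp_pos 1))
    nlinarith [Real.exp_pos 1, inv_nonneg.mpr (Real.exp_pos 1).le]
  have hs2H : s ^ (2*H) = s ^ (2*H-2) * s * s := by
    have h1 : s ^ (2*H-2) * s * s = s ^ ((2*H-2) + 1 + 1) := by
      rw [Real.rpow_add hs_pos, Real.rpow_add hs_pos, Real.rpow_one]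
    rw [h1]; congr 1; ring
  have hmin_nonneg : (0:ℝ) ≤ min 1 (a ^ (-(2*H))) :=
    le_min zero_le_one (Real.rpow_nonneg ha.le _)
  have hT : (0:ℝ) ≤ min t (1/2) := le_min ht (by norm_num)
  calc (1/4) * (min t (1/2)) ^ (2*H) * min 1 (a ^ (-(2*H)))
      = (1/4) * ((min t (1/2)) ^ (2*H) * min 1 (a ^ (-(2*H)))) := by ring
    _ ≤ Real.exp (-1) * s ^ (2*H) :=
        mul_le_mul key4 key3 (mul_nonneg (Real.rpow_nonneg hT _) hmin_nonneg)
          (Real.exp_nonneg _)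
    _ = s * (s * cst) := by rw [hcst_def, hs2H]; ring
    _ ≤ ∫ r in Icc (0:ℝ) t, F r := main
end

section
/- Let $0 < \alpha_1$, $0 < \alpha_2 < 1$, $d \ge 1$, $n \ge 1$ natural numbers with $n < Q := 1/\alpha_2 + d/\min(\alpha_1,1)$, and let $R > 0$. Then $\int_0^R \int_0^R \big(r^{\alpha_2} + \rho^{\min(\alpha_1,1)}\big)^{-n} \rho^{d-1}\,dr\,d\rho < \infty$. -/
open MeasureTheory Set Real

theorem stmt13 (α₁ α₂ : ℝ) (d n : ℕ) (hα₁ : 0 < α₁) (hα₂0 : 0 < α₂) (hα₂1 : α₂ < 1)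
    (hd : 1 ≤ d) (hn : 1 ≤ n)
    (hQ : (n : ℝ) < 1/α₂ + d / min α₁ 1) (R : ℝ) (hR : 0 < R) :
    IntegrableOn
      (fun p : ℝ × ℝ =>
        (p.1 ^ α₂ + p.2 ^ (min α₁ 1)) ^ (-(n : ℝ)) * p.2 ^ ((d : ℝ) - 1))
      (Ioc 0 R ×ˢ Ioc 0 R) := by
  set β := min α₁ 1 with hβdef
  have hβ : 0 < β := lt_min hα₁ one_pos
  have hN : (0:ℝ) < (n:ℝ) := by exact_mod_cast hn
  set N := (n:ℝ) with hNdef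
  have hdpos : (0:ℝ) < (d:ℝ) := by exact_mod_cast hd
  have hkey : 1 - (d:ℝ)/(N*β) < 1/(N*α₂) := by
    have h1 : 1 < (1/α₂ + (d:ℝ)/β)/N := (one_lt_div hN).2 hQ
    have e1 : 1/(N*α₂) = (1/α₂)/N := by rw [div_div, mul_comm]
    have e2 : (d:ℝ)/(N*β) = ((d:ℝ)/β)/N := by rw [div_div, mul_comm]
    have h2 : (1/α₂)/N + ((d:ℝ)/β)/N = (1/α₂ + (d:ℝ)/β)/N := by rw [← add_div]
    linarith
  set a := max 0 (1 - (d:ℝ)/(N*β)) with hadef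
  set b := min 1 (1/(N*α₂)) with hbdef
  have hab : a < b := by
    apply max_lt
    · exact lt_min one_pos (by positivity)
    · exact lt_min (by nlinarith [div_pos hdpos (mul_pos hN hβ)]) hkey
  set t := (a + b)/2 with htdef
  have hta : a < t := by rw [htdef]; linarith
  have htb : t < b := by rw [htdef]; linarith
  have ht0 : 0 ≤ t := le_trans (le_max_left 0 _) hta.le
  have ht1 : t ≤ 1 := le_trans htb.le (min_le_left _ _)
  have h1t : 0 ≤ 1 - t := by linarith
  have htα : α₂ * t * N < 1 := by
    have h := lt_of_lt_of_le htb (min_le_right _ _)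
    have := (lt_div_iff₀ (by positivity : (0:ℝ) < N*α₂)).1 h
    nlinarith
  have htβ : (1 - t) * N * β < d := by
    have h := lt_of_le_of_lt (le_max_right 0 (1 - (d:ℝ)/(N*β))) hta
    have h2 : 1 - t < (d:ℝ)/(N*β) := by linarith
    have := (lt_div_iff₀ (by positivity : (0:ℝ) < N*β)).1 h2
    nlinarith
  set c₁ := α₂ * (t * (-N)) with hc₁def
  set c₂ := β * ((1-t) * (-N)) + ((d:ℝ) - 1) with hc₂def
  have hc₁ : -1 < c₁ := by
    have h : c₁ = -(α₂ * t * N) := by rw [hc₁def]; ring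
    linarith
  have hc₂ : -1 < c₂ := by
    have h : c₂ = (d:ℝ) - 1 - (1-t) * N * β := by rw [hc₂def]; ring
    linarith
  have hi₁ : IntegrableOn (fun x : ℝ => x ^ c₁) (Ioc 0 R) volume :=
    (intervalIntegrable_iff_integrableOn_Ioc_of_le hR.le).1 (intervalIntegral.intervalIntegrable_rpow' hc₁)
  have hi₂ : IntegrableOn (fun x : ℝ => x ^ c₂) (Ioc 0 R) volume :=
    (intervalIntegrable_iff_integrableOn_Ioc_of_le hR.le).1 (intervalIntegral.intervalIntegrable_rpow' hc₂)
  have hprod : IntegrableOn (fun p : ℝ × ℝ => p.1 ^ c₁ * p.2 ^ c₂)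
      (Ioc 0 R ×ˢ Ioc 0 R) volume := by
    rw [IntegrableOn, Measure.volume_eq_prod, ← Measure.prod_restrict]
    exact hi₁.mul_prod hi₂
  refine Integrable.mono hprod ?_ ?_
  · apply Measurable.aestronglyMeasurable
    fun_prop
  · filter_upwards [ae_restrict_mem (measurableSet_Ioc.prod measurableSet_Ioc)] with p hp
    obtain ⟨⟨hr, _⟩, hρ, _⟩ := hp
    have hx : 0 < p.1 ^ α₂ := rpow_pos_of_pos hr _
    have hy : 0 < p.2 ^ β := rpow_pos_of_pos hρ _
    have hmax : 0 < max (p.1 ^ α₂) (p.2 ^ β) := lt_max_of_lt_left hx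
    have step1 : (p.1 ^ α₂) ^ t * (p.2 ^ β) ^ (1-t) ≤ p.1 ^ α₂ + p.2 ^ β := by
      have hm1 : (p.1 ^ α₂) ^ t ≤ (max (p.1 ^ α₂) (p.2 ^ β)) ^ t :=
        rpow_le_rpow hx.le (le_max_left _ _) ht0
      have hm2 : (p.2 ^ β) ^ (1-t) ≤ (max (p.1 ^ α₂) (p.2 ^ β)) ^ (1-t) :=
        rpow_le_rpow hy.le (le_max_right _ _) h1t
      have heq : (max (p.1 ^ α₂) (p.2 ^ β)) ^ t * (max (p.1 ^ α₂) (p.2 ^ β)) ^ (1-t)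
          = max (p.1 ^ α₂) (p.2 ^ β) := by
        rw [← rpow_add hmax]; simp
      calc (p.1 ^ α₂) ^ t * (p.2 ^ β) ^ (1-t)
          ≤ (max (p.1 ^ α₂) (p.2 ^ β)) ^ t * (max (p.1 ^ α₂) (p.2 ^ β)) ^ (1-t) :=
            mul_le_mul hm1 hm2 (rpow_nonneg hy.le _) (rpow_nonneg hmax.le _)
        _ = max (p.1 ^ α₂) (p.2 ^ β) := heq
        _ ≤ p.1 ^ α₂ + p.2 ^ β :=
            max_le (le_add_of_nonneg_right hy.le) (le_add_of_nonneg_left hx.le)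
    have hprodpos : 0 < (p.1 ^ α₂) ^ t * (p.2 ^ β) ^ (1-t) :=
      mul_pos (rpow_pos_of_pos hx _) (rpow_pos_of_pos hy _)
    have step2 : (p.1 ^ α₂ + p.2 ^ β) ^ (-N) ≤ ((p.1 ^ α₂) ^ t * (p.2 ^ β) ^ (1-t)) ^ (-N) :=
      rpow_le_rpow_of_nonpos hprodpos step1 (neg_nonpos.2 hN.le)
    have step3 : ((p.1 ^ α₂) ^ t * (p.2 ^ β) ^ (1-t)) ^ (-N)
        = p.1 ^ c₁ * p.2 ^ (β * ((1-t) * (-N))) := by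
      rw [mul_rpow (rpow_nonneg hx.le _) (rpow_nonneg hy.le _),
        ← rpow_mul hx.le, ← rpow_mul hy.le, ← rpow_mul hr.le, ← rpow_mul hρ.le]
    have hsum : 0 < p.1 ^ α₂ + p.2 ^ β := by positivity
    have hρd : 0 ≤ p.2 ^ ((d:ℝ) - 1) := rpow_nonneg hρ.le _
    have key : (p.1 ^ α₂ + p.2 ^ β) ^ (-N) * p.2 ^ ((d:ℝ) - 1) ≤ p.1 ^ c₁ * p.2 ^ c₂ := by
      have h1 : (p.1 ^ α₂ + p.2 ^ β) ^ (-N) * p.2 ^ ((d:ℝ) - 1)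
          ≤ (p.1 ^ c₁ * p.2 ^ (β * ((1-t) * (-N)))) * p.2 ^ ((d:ℝ) - 1) := by
        rw [← step3]
        exact mul_le_mul_of_nonneg_right step2 hρd
      have h2 : (p.1 ^ c₁ * p.2 ^ (β * ((1-t) * (-N)))) * p.2 ^ ((d:ℝ) - 1)
          = p.1 ^ c₁ * p.2 ^ c₂ := by
        rw [hc₂def, rpow_add hρ]; ring
      linarith [h1, h2.le, h2.ge]
    have hf0 : 0 ≤ (p.1 ^ α₂ + p.2 ^ β) ^ (-N) * p.2 ^ ((d:ℝ) - 1) :=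
      mul_nonneg (rpow_nonneg hsum.le _) hρd
    have hg0 : 0 ≤ p.1 ^ c₁ * p.2 ^ c₂ :=
      mul_nonneg (rpow_nonneg hr.le _) (rpow_nonneg hρ.le _)
    show ‖_‖ ≤ ‖_‖
    rw [Real.norm_eq_abs, Real.norm_eq_abs, abs_of_nonneg hf0, abs_of_nonneg hg0]
    exact key
end

section
/- Let $\alpha \ge 0$, $\gamma > 0$, $H \in (1/2,1)$, $\beta \in (0, 2(\alpha+\gamma)H)$ with $\alpha_1 := (\alpha+\gamma)H - \beta/2 \in (0,1)$, and let $\mu$ be a measure on $\mathbb{R}^d$ with homogeneous density of degree $\beta - d$ that is finite on the unit ball and has finite positive spherical integral. Set $\Psi(\xi) = |\xi|^\gamma(1+|\xi|^2)^{\alpha/2}$ and $\alpha_2 = \alpha_1/(\alpha+\gamma)$. Then $\iint_{\{|\tau|^{\alpha_2} \vee |\xi|^{\alpha_1} \ge 1\}} \frac{|\tau|^{1-2H}}{|\xi|^{2(\gamma+\alpha)} + \tau^2}\,d\tau\,\mu(d\xi) < \infty$. -/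
open MeasureTheory Metric Set
open scoped ENNReal

private lemma lint_neg_pre (f : ℝ → ℝ≥0∞) {s : Set ℝ} (hs : MeasurableSet s) :
    ∫⁻ x in s, f x ∂volume = ∫⁻ x in (fun x : ℝ => -x) ⁻¹' s, f (-x) ∂volume := by
  have h1 : (volume : Measure ℝ).restrict s
      = ((volume : Measure ℝ).restrict ((fun x : ℝ => -x) ⁻¹' s)).map (fun x : ℝ => -x) := by
    rw [← Measure.restrict_map measurable_neg hs, Measure.map_neg_eq_self]
  rw [h1]
  exact MeasureTheory.lintegral_map_equiv f (Homeomorph.neg ℝ).toMeasurableEquiv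

private lemma lint_abs_even (f : ℝ → ℝ≥0∞) {s : Set ℝ} (hs : MeasurableSet s)
    (hsym : ∀ x : ℝ, x ∈ s → -x ∈ s) :
    ∫⁻ x in s, f |x| ∂volume ≤ 2 * ∫⁻ x in s ∩ Ici 0, f x ∂volume := by
  have hsub : s ⊆ (s ∩ Iio 0) ∪ (s ∩ Ici 0) := by
    intro x hx
    rcases lt_or_ge x 0 with h | h
    · exact Or.inl ⟨hx, h⟩
    · exact Or.inr ⟨hx, h⟩
  have hIci : ∫⁻ x in s ∩ Ici 0, f |x| ∂volume = ∫⁻ x in s ∩ Ici 0, f x ∂volume :=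
    setLIntegral_congr_fun (hs.inter measurableSet_Ici)
      (fun x hx => by rw [abs_of_nonneg hx.2])
  have hIio : ∫⁻ x in s ∩ Iio 0, f |x| ∂volume ≤ ∫⁻ x in s ∩ Ici 0, f x ∂volume := by
    rw [lint_neg_pre (fun x => f |x|) (hs.inter measurableSet_Iio)]
    have hpre : (fun x : ℝ => -x) ⁻¹' (s ∩ Iio 0) ⊆ s ∩ Ici 0 := by
      rintro x ⟨h1, h2⟩
      simp only [mem_preimage, mem_Iio] at h1 h2
      exact ⟨by simpa using hsym _ h1, by simp only [mem_Ici]; linarith⟩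
    calc ∫⁻ x in (fun x : ℝ => -x) ⁻¹' (s ∩ Iio 0), f |(-x)| ∂volume
        ≤ ∫⁻ x in s ∩ Ici 0, f |(-x)| ∂volume := lintegral_mono_set hpre
      _ = ∫⁻ x in s ∩ Ici 0, f x ∂volume :=
        setLIntegral_congr_fun (hs.inter measurableSet_Ici)
          (fun x hx => by rw [abs_neg, abs_of_nonneg hx.2])
  calc ∫⁻ x in s, f |x| ∂volume
      ≤ ∫⁻ x in (s ∩ Iio 0) ∪ (s ∩ Ici 0), f |x| ∂volume := lintegral_mono_set hsub
    _ ≤ ∫⁻ x, f |x| ∂((volume : Measure ℝ).restrict (s ∩ Iio 0)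
          + (volume : Measure ℝ).restrict (s ∩ Ici 0)) :=
        lintegral_mono' (Measure.restrict_union_le _ _) le_rfl
    _ = ∫⁻ x in s ∩ Iio 0, f |x| ∂volume + ∫⁻ x in s ∩ Ici 0, f |x| ∂volume :=
        lintegral_add_measure _ _ _
    _ ≤ ∫⁻ x in s ∩ Ici 0, f x ∂volume + ∫⁻ x in s ∩ Ici 0, f x ∂volume := by
        exact add_le_add hIio (le_of_eq hIci)
    _ = 2 * ∫⁻ x in s ∩ Ici 0, f x ∂volume := (two_mul _).symm

private lemma lint_Ioc_rpow {M r : ℝ} (hM : 0 ≤ M) (hr : -1 < r) :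
    ∫⁻ t in Ioc (0:ℝ) M, ENNReal.ofReal (t ^ r) ∂volume
      = ENNReal.ofReal (M ^ (r+1) / (r+1)) := by
  have hr1 : (0:ℝ) < r + 1 := by linarith
  have hint : IntegrableOn (fun t : ℝ => t ^ r) (Ioc 0 M) volume := by
    have := intervalIntegral.intervalIntegrable_rpow' (a := 0) (b := M) hr
    rwa [intervalIntegrable_iff, uIoc_of_le hM] at this
  have hnn : 0 ≤ᵐ[volume.restrict (Ioc (0:ℝ) M)] fun t : ℝ => t ^ r :=
    (ae_restrict_iff' measurableSet_Ioc).2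
      (ae_of_all _ (fun t ht => Real.rpow_nonneg ht.1.le r))
  rw [← ofReal_integral_eq_lintegral_ofReal hint hnn,
    ← intervalIntegral.integral_of_le hM, integral_rpow (Or.inl hr),
    Real.zero_rpow hr1.ne', sub_zero]

private lemma lint_Ioi_rpow {M r : ℝ} (hM : 0 < M) (hr : r < -1) :
    ∫⁻ t in Ioi M, ENNReal.ofReal (t ^ r) ∂volume
      = ENNReal.ofReal (-M ^ (r+1) / (r+1)) := by
  have hnn : 0 ≤ᵐ[volume.restrict (Ioi M)] fun t : ℝ => t ^ r :=
    (ae_restrict_iff' measurableSet_Ioi).2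
      (ae_of_all _ (fun t ht => Real.rpow_nonneg ((hM.trans ht).le) r))
  rw [← ofReal_integral_eq_lintegral_ofReal (integrableOn_Ioi_rpow_of_lt hr hM) hnn,
    integral_Ioi_rpow_of_lt hr hM]

private lemma lint_smul_scale {d : ℕ} (c : ℝ) (hc : 0 < c)
    (g : EuclideanSpace ℝ (Fin d) → ℝ≥0∞) :
    ∫⁻ x, g (c • x) ∂(volume : Measure (EuclideanSpace ℝ (Fin d)))
      = ENNReal.ofReal ((c ^ d)⁻¹) * ∫⁻ x, g x ∂(volume : Measure (EuclideanSpace ℝ (Fin d))) := by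
  have hc0 : c ≠ 0 := hc.ne'
  set e : EuclideanSpace ℝ (Fin d) ≃ᵐ EuclideanSpace ℝ (Fin d) :=
    (Homeomorph.smul (isUnit_iff_ne_zero.2 hc0).unit).toMeasurableEquiv with he
  have hee : (e : EuclideanSpace ℝ (Fin d) → EuclideanSpace ℝ (Fin d)) = fun x => c • x := by
    funext x
    simp [he, Homeomorph.smul, Units.smul_def]
  have hmap : (volume : Measure (EuclideanSpace ℝ (Fin d))).map e
      = ENNReal.ofReal ((c ^ d)⁻¹) • (volume : Measure (EuclideanSpace ℝ (Fin d))) := by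
    rw [hee, Measure.map_addHaar_smul volume hc0]
    congr 1
    rw [finrank_euclideanSpace_fin, abs_of_nonneg (by positivity)]
  calc ∫⁻ x, g (c • x) ∂(volume : Measure (EuclideanSpace ℝ (Fin d)))
      = ∫⁻ x, g (e x) ∂(volume : Measure (EuclideanSpace ℝ (Fin d))) := by rw [hee]
    _ = ∫⁻ y, g y ∂((volume : Measure (EuclideanSpace ℝ (Fin d))).map e) :=
        (MeasureTheory.lintegral_map_equiv g e).symm
    _ = ENNReal.ofReal ((c ^ d)⁻¹) * ∫⁻ x, g x ∂(volume : Measure (EuclideanSpace ℝ (Fin d))) := by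
        rw [hmap, lintegral_smul_measure, smul_eq_mul]

private lemma priv_hball (d : ℕ) (hd : 1 ≤ d) (β : ℝ) (hβ0 : 0 < β)
    (Υ : EuclideanSpace ℝ (Fin d) → ℝ) (hnn : ∀ ξ, 0 ≤ Υ ξ)
    (hscale : ∀ c > (0:ℝ), ∀ ξ : EuclideanSpace ℝ (Fin d), ξ ≠ 0 →
      Υ (c • ξ) = c ^ (β - d) * Υ ξ)
    (μ : Measure (EuclideanSpace ℝ (Fin d)))
    (hμ : μ = volume.withDensity (fun ξ => ENNReal.ofReal (Υ ξ))) :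
    ∀ R : ℝ, 0 < R →
      μ (closedBall 0 R) = ENNReal.ofReal (R ^ β) * μ (closedBall 0 1) := by
  haveI : Nonempty (Fin d) := ⟨⟨0, hd⟩⟩
  haveI : Nontrivial (EuclideanSpace ℝ (Fin d)) := inferInstance
  intro R hR
  have hRinv : (0:ℝ) < R⁻¹ := inv_pos.2 hR
  have hpre : (fun x : EuclideanSpace ℝ (Fin d) => R⁻¹ • x) ⁻¹' (closedBall 0 1)
      = closedBall 0 R := by
    ext x
    rw [mem_preimage, mem_closedBall_zero_iff, mem_closedBall_zero_iff, norm_smul,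
      Real.norm_eq_abs, abs_of_pos hRinv]
    constructor
    · intro h
      nlinarith [mul_inv_cancel₀ hR.ne', norm_nonneg x]
    · intro h
      nlinarith [mul_inv_cancel₀ hR.ne', norm_nonneg x]
  have hBR : MeasurableSet (closedBall (0:EuclideanSpace ℝ (Fin d)) R) := measurableSet_closedBall
  have hB1 : MeasurableSet (closedBall (0:EuclideanSpace ℝ (Fin d)) 1) := measurableSet_closedBall
  have hμR : μ (closedBall 0 R) = ∫⁻ x, (closedBall (0:EuclideanSpace ℝ (Fin d)) R).indicator
      (fun ξ => ENNReal.ofReal (Υ ξ)) x ∂volume := by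
    rw [hμ, withDensity_apply _ hBR, lintegral_indicator hBR]
  have hμ1 : μ (closedBall 0 1) = ∫⁻ x, (closedBall (0:EuclideanSpace ℝ (Fin d)) 1).indicator
      (fun ξ => ENNReal.ofReal (Υ ξ)) x ∂volume := by
    rw [hμ, withDensity_apply _ hB1, lintegral_indicator hB1]
  have hsub := lint_smul_scale (d := d) R⁻¹ hRinv
    ((closedBall (0:EuclideanSpace ℝ (Fin d)) 1).indicator (fun ξ => ENNReal.ofReal (Υ ξ)))
  have hne : ∀ᵐ x ∂(volume : Measure (EuclideanSpace ℝ (Fin d))), x ≠ (0:EuclideanSpace ℝ (Fin d)) := by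
    refine ae_iff.2 ?_
    simpa [not_not, setOf_eq_eq_singleton] using measure_singleton (0:EuclideanSpace ℝ (Fin d))
  have hae : (fun x => (closedBall (0:EuclideanSpace ℝ (Fin d)) 1).indicator
        (fun ξ => ENNReal.ofReal (Υ ξ)) (R⁻¹ • x))
      =ᵐ[(volume : Measure (EuclideanSpace ℝ (Fin d)))]
      fun x => ENNReal.ofReal (R⁻¹ ^ (β - (d:ℝ))) *
        (closedBall (0:EuclideanSpace ℝ (Fin d)) R).indicator (fun ξ => ENNReal.ofReal (Υ ξ)) x := by
    filter_upwards [hne] with x hx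
    by_cases hxR : x ∈ closedBall (0:EuclideanSpace ℝ (Fin d)) R
    · have hx1 : R⁻¹ • x ∈ closedBall (0:EuclideanSpace ℝ (Fin d)) 1 := by
        rw [← hpre] at hxR; exact hxR
      rw [indicator_of_mem hx1, indicator_of_mem hxR, hscale R⁻¹ hRinv x hx,
        ENNReal.ofReal_mul (by positivity)]
    · have hx1 : R⁻¹ • x ∉ closedBall (0:EuclideanSpace ℝ (Fin d)) 1 := by
        rw [← hpre] at hxR; exact hxR
      rw [indicator_of_notMem hx1, indicator_of_notMem hxR, mul_zero]
  have heq : ENNReal.ofReal (R⁻¹ ^ (β - (d:ℝ))) * μ (closedBall 0 R)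
      = ENNReal.ofReal ((R⁻¹ ^ d)⁻¹) * μ (closedBall 0 1) := by
    calc ENNReal.ofReal (R⁻¹ ^ (β - (d:ℝ))) * μ (closedBall 0 R)
        = ∫⁻ x, ENNReal.ofReal (R⁻¹ ^ (β - (d:ℝ))) *
            (closedBall (0:EuclideanSpace ℝ (Fin d)) R).indicator
              (fun ξ => ENNReal.ofReal (Υ ξ)) x ∂volume := by
          rw [hμR, lintegral_const_mul' _ _ ENNReal.ofReal_ne_top]
      _ = ∫⁻ x, (closedBall (0:EuclideanSpace ℝ (Fin d)) 1).indicator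
            (fun ξ => ENNReal.ofReal (Υ ξ)) (R⁻¹ • x) ∂volume := (lintegral_congr_ae hae).symm
      _ = ENNReal.ofReal ((R⁻¹ ^ d)⁻¹) * μ (closedBall 0 1) := by rw [hsub, hμ1]
  have hcancel : ENNReal.ofReal (R ^ (β - (d:ℝ))) * ENNReal.ofReal (R⁻¹ ^ (β - (d:ℝ))) = 1 := by
    rw [← ENNReal.ofReal_mul (by positivity), ← Real.mul_rpow hR.le hRinv.le,
      mul_inv_cancel₀ hR.ne', Real.one_rpow, ENNReal.ofReal_one]
  have hpow : ENNReal.ofReal (R ^ (β - (d:ℝ))) * ENNReal.ofReal ((R⁻¹ ^ d)⁻¹)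
      = ENNReal.ofReal (R ^ β) := by
    rw [inv_pow, inv_inv, ← ENNReal.ofReal_mul (by positivity), ← Real.rpow_natCast R d,
      ← Real.rpow_add hR]
    norm_num
  calc μ (closedBall 0 R)
      = (ENNReal.ofReal (R ^ (β - (d:ℝ))) * ENNReal.ofReal (R⁻¹ ^ (β - (d:ℝ)))) *
          μ (closedBall 0 R) := by rw [hcancel, one_mul]
    _ = ENNReal.ofReal (R ^ (β - (d:ℝ))) *
          (ENNReal.ofReal (R⁻¹ ^ (β - (d:ℝ))) * μ (closedBall 0 R)) := by ring
    _ = ENNReal.ofReal (R ^ (β - (d:ℝ))) * (ENNReal.ofReal ((R⁻¹ ^ d)⁻¹) * μ (closedBall 0 1)) := by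
        rw [heq]
    _ = ENNReal.ofReal (R ^ β) * μ (closedBall 0 1) := by rw [← mul_assoc, hpow]

private lemma priv_htail (d : ℕ) (β pe : ℝ) (hβ0 : 0 < β) (hβpe : β < pe)
    (μ : Measure (EuclideanSpace ℝ (Fin d)))
    (hball : ∀ R : ℝ, 0 < R →
      μ (closedBall 0 R) = ENNReal.ofReal (R ^ β) * μ (closedBall 0 1))
    (hfin : μ (closedBall 0 1) < ⊤) :
    ∫⁻ ξ in {ξ : EuclideanSpace ℝ (Fin d) | 1 ≤ ‖ξ‖},
      ENNReal.ofReal (‖ξ‖ ^ (-pe)) ∂μ < ⊤ := by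
  set q : ℝ := (2:ℝ) ^ (β - pe) with hq
  have hq1 : q < 1 := Real.rpow_lt_one_of_one_lt_of_neg one_lt_two (by linarith)
  have hq0 : 0 ≤ q := Real.rpow_nonneg (by norm_num) _
  set Sh : ℕ → Set (EuclideanSpace ℝ (Fin d)) :=
    fun n => {ξ | (2:ℝ)^n ≤ ‖ξ‖ ∧ ‖ξ‖ ≤ (2:ℝ)^(n+1)} with hSh
  have hcover : {ξ : EuclideanSpace ℝ (Fin d) | 1 ≤ ‖ξ‖} ⊆ ⋃ n : ℕ, Sh n := by
    intro ξ hξ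
    have hx : (1:ℝ) ≤ ‖ξ‖ := hξ
    have hfl : 1 ≤ ⌊‖ξ‖⌋₊ := Nat.le_floor (by exact_mod_cast hx)
    refine mem_iUnion.2 ⟨Nat.log 2 ⌊‖ξ‖⌋₊, ?_, ?_⟩
    · have h1 : (2:ℕ)^(Nat.log 2 ⌊‖ξ‖⌋₊) ≤ ⌊‖ξ‖⌋₊ := Nat.pow_log_le_self 2 (by omega)
      have h2 : (⌊‖ξ‖⌋₊ : ℝ) ≤ ‖ξ‖ := Nat.floor_le (by linarith)
      calc (2:ℝ)^(Nat.log 2 ⌊‖ξ‖⌋₊) = ((2:ℕ)^(Nat.log 2 ⌊‖ξ‖⌋₊) : ℕ) := by push_cast; ring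
        _ ≤ (⌊‖ξ‖⌋₊ : ℝ) := by exact_mod_cast h1
        _ ≤ ‖ξ‖ := h2
    · have h3 : ⌊‖ξ‖⌋₊ < 2^(Nat.log 2 ⌊‖ξ‖⌋₊ + 1) := Nat.lt_pow_succ_log_self (by norm_num) _
      have h4 : ‖ξ‖ < (⌊‖ξ‖⌋₊ : ℝ) + 1 := Nat.lt_floor_add_one _
      have h5 : (⌊‖ξ‖⌋₊ : ℝ) + 1 ≤ ((2:ℕ)^(Nat.log 2 ⌊‖ξ‖⌋₊ + 1) : ℕ) := by
        exact_mod_cast Nat.succ_le_of_lt h3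
      have : ‖ξ‖ ≤ ((2:ℕ)^(Nat.log 2 ⌊‖ξ‖⌋₊ + 1) : ℕ) := by linarith
      calc ‖ξ‖ ≤ ((2:ℕ)^(Nat.log 2 ⌊‖ξ‖⌋₊ + 1) : ℕ) := this
        _ = (2:ℝ)^(Nat.log 2 ⌊‖ξ‖⌋₊ + 1) := by push_cast; ring
  have hterm : ∀ n : ℕ, ∫⁻ ξ in Sh n, ENNReal.ofReal (‖ξ‖ ^ (-pe)) ∂μ
      ≤ (ENNReal.ofReal ((2:ℝ)^β) * μ (closedBall 0 1)) * (ENNReal.ofReal q)^n := by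
    intro n
    have h2n : (0:ℝ) < 2^n := by positivity
    have hmeas : MeasurableSet (Sh n) := by
      have : Sh n = {ξ : EuclideanSpace ℝ (Fin d) | (2:ℝ)^n ≤ ‖ξ‖}
          ∩ {ξ | ‖ξ‖ ≤ (2:ℝ)^(n+1)} := rfl
      rw [this]
      exact (measurableSet_le measurable_const measurable_norm).inter
        (measurableSet_le measurable_norm measurable_const)
    have hkey : ((2:ℝ)^n : ℝ)^(-pe) * ((2:ℝ)^(n+1))^β = (2:ℝ)^β * q^n := by
      rw [hq, ← Real.rpow_natCast (2:ℝ) n, ← Real.rpow_natCast ((2:ℝ) ^ (β - pe)) n,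
        ← Real.rpow_natCast (2:ℝ) (n+1), ← Real.rpow_mul (by norm_num : (0:ℝ) ≤ 2),
        ← Real.rpow_mul (by norm_num : (0:ℝ) ≤ 2), ← Real.rpow_mul (by norm_num : (0:ℝ) ≤ 2),
        ← Real.rpow_add (by norm_num : (0:ℝ) < 2), ← Real.rpow_add (by norm_num : (0:ℝ) < 2)]
      congr 1
      push_cast
      ring
    calc ∫⁻ ξ in Sh n, ENNReal.ofReal (‖ξ‖ ^ (-pe)) ∂μ
        ≤ ∫⁻ _ in Sh n, ENNReal.ofReal (((2:ℝ)^n)^(-pe)) ∂μ := by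
          refine setLIntegral_mono' hmeas (fun ξ hξ => ?_)
          exact ENNReal.ofReal_le_ofReal
            (Real.rpow_le_rpow_of_nonpos h2n hξ.1 (by linarith))
      _ = ENNReal.ofReal (((2:ℝ)^n)^(-pe)) * μ (Sh n) := setLIntegral_const _ _
      _ ≤ ENNReal.ofReal (((2:ℝ)^n)^(-pe)) * μ (closedBall 0 ((2:ℝ)^(n+1))) :=
          mul_le_mul_right (measure_mono (fun ξ hξ => mem_closedBall_zero_iff.2 hξ.2)) _
      _ = ENNReal.ofReal (((2:ℝ)^n)^(-pe)) * (ENNReal.ofReal (((2:ℝ)^(n+1))^β)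
            * μ (closedBall 0 1)) := by rw [hball _ (by positivity)]
      _ = ENNReal.ofReal (((2:ℝ)^n)^(-pe) * ((2:ℝ)^(n+1))^β) * μ (closedBall 0 1) := by
          rw [ENNReal.ofReal_mul (by positivity), mul_assoc]
      _ = ENNReal.ofReal ((2:ℝ)^β * q^n) * μ (closedBall 0 1) := by rw [hkey]
      _ = (ENNReal.ofReal ((2:ℝ)^β) * μ (closedBall 0 1)) * (ENNReal.ofReal q)^n := by
          rw [ENNReal.ofReal_mul (by positivity), ENNReal.ofReal_pow hq0]
          ring
  calc ∫⁻ ξ in {ξ : EuclideanSpace ℝ (Fin d) | 1 ≤ ‖ξ‖}, ENNReal.ofReal (‖ξ‖ ^ (-pe)) ∂μ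
      ≤ ∫⁻ ξ in ⋃ n : ℕ, Sh n, ENNReal.ofReal (‖ξ‖ ^ (-pe)) ∂μ := lintegral_mono_set hcover
    _ ≤ ∑' n : ℕ, ∫⁻ ξ in Sh n, ENNReal.ofReal (‖ξ‖ ^ (-pe)) ∂μ := lintegral_iUnion_le _ _
    _ ≤ ∑' n : ℕ, (ENNReal.ofReal ((2:ℝ)^β) * μ (closedBall 0 1)) * (ENNReal.ofReal q)^n :=
        ENNReal.tsum_le_tsum hterm
    _ = (ENNReal.ofReal ((2:ℝ)^β) * μ (closedBall 0 1)) * ∑' n : ℕ, (ENNReal.ofReal q)^n :=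
        ENNReal.tsum_mul_left
    _ < ⊤ := by
        refine ENNReal.mul_lt_top (ENNReal.mul_lt_top ENNReal.ofReal_lt_top hfin) ?_
        rw [ENNReal.tsum_geometric]
        refine ENNReal.inv_lt_top.2 ?_
        rw [tsub_pos_iff_lt]
        exact ENNReal.ofReal_lt_one.2 hq1

private lemma priv_hnear (d : ℕ) (γ α H : ℝ) (hs0 : 0 < γ + α) (hH0 : 0 < H) (hH2 : H < 1)
    (ξ : EuclideanSpace ℝ (Fin d)) :
    ∫⁻ τ in {τ : ℝ | 1 ≤ |τ|},
        ENNReal.ofReal (|τ| ^ (1 - 2*H) / (‖ξ‖ ^ (2*(γ + α)) + τ ^ 2)) ∂volume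
      ≤ 2 * ∫⁻ t in Ioi (1:ℝ), ENNReal.ofReal (t ^ (-1 - 2*H)) ∂volume := by
  set D : ℝ := ‖ξ‖ ^ (2*(γ + α)) with hD
  have hD0 : 0 ≤ D := Real.rpow_nonneg (norm_nonneg _) _
  have hT1m : MeasurableSet {τ : ℝ | 1 ≤ |τ|} := measurableSet_le measurable_const measurable_abs
  have hgf : ∀ τ : ℝ, ENNReal.ofReal (|τ| ^ (1 - 2*H) / (D + τ ^ 2))
      = (fun t : ℝ => ENNReal.ofReal (t ^ (1 - 2*H) / (D + t ^ 2))) |τ| := by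
    intro τ
    simp only [sq_abs]
  have hseteq : {τ : ℝ | 1 ≤ |τ|} ∩ Ici 0 = Ici (1:ℝ) := by
    ext x
    simp only [mem_inter_iff, mem_setOf_eq, mem_Ici]
    constructor
    · rintro ⟨h1, h2⟩; rwa [abs_of_nonneg h2] at h1
    · intro h; exact ⟨by rw [abs_of_nonneg (by linarith)]; exact h, by linarith⟩
  calc ∫⁻ τ in {τ : ℝ | 1 ≤ |τ|}, ENNReal.ofReal (|τ| ^ (1 - 2*H) / (D + τ ^ 2)) ∂volume
      = ∫⁻ τ in {τ : ℝ | 1 ≤ |τ|},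
          (fun t : ℝ => ENNReal.ofReal (t ^ (1 - 2*H) / (D + t ^ 2))) |τ| ∂volume :=
        lintegral_congr fun τ => hgf τ
    _ ≤ 2 * ∫⁻ t in {τ : ℝ | 1 ≤ |τ|} ∩ Ici 0,
          ENNReal.ofReal (t ^ (1 - 2*H) / (D + t ^ 2)) ∂volume :=
        lint_abs_even _ hT1m (fun x hx => by simpa [abs_neg] using hx)
    _ = 2 * ∫⁻ t in Ici (1:ℝ), ENNReal.ofReal (t ^ (1 - 2*H) / (D + t ^ 2)) ∂volume := by
        rw [hseteq]
    _ = 2 * ∫⁻ t in Ioi (1:ℝ), ENNReal.ofReal (t ^ (1 - 2*H) / (D + t ^ 2)) ∂volume := by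
        rw [setLIntegral_congr (Ioi_ae_eq_Ici (a := (1:ℝ))).symm]
    _ ≤ 2 * ∫⁻ t in Ioi (1:ℝ), ENNReal.ofReal (t ^ (-1 - 2*H)) ∂volume := by
        refine mul_le_mul_right (setLIntegral_mono (by fun_prop) (fun t ht => ?_)) 2
        have ht0 : (0:ℝ) < t := lt_trans one_pos ht
        refine ENNReal.ofReal_le_ofReal ?_
        have h2 : t ^ (1-2*H) / t^2 = t ^ (-1-2*H) := by
          rw [show (t:ℝ)^(2:ℕ) = t ^ ((2:ℕ):ℝ) from (Real.rpow_natCast t 2).symm,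
            ← Real.rpow_sub ht0]
          congr 1
          push_cast
          ring
        calc t ^ (1-2*H) / (D + t^2) ≤ t ^ (1-2*H) / t^2 := by
              gcongr
              linarith
          _ = t ^ (-1-2*H) := h2

private lemma priv_hfar (d : ℕ) (γ α H : ℝ) (hs0 : 0 < γ + α) (hH0 : 0 < H) (hH2 : H < 1)
    (h2H : 0 < 2 - 2*H)
    (ξ : EuclideanSpace ℝ (Fin d)) (hξ : 1 ≤ ‖ξ‖) :
    ∫⁻ τ : ℝ, ENNReal.ofReal (|τ| ^ (1 - 2*H) / (‖ξ‖ ^ (2*(γ + α)) + τ ^ 2)) ∂volume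
      ≤ ENNReal.ofReal (2 / (2 - 2*H) + 1/H)
          * ENNReal.ofReal (‖ξ‖ ^ (-(2 * (γ + α) * H))) := by
  set R : ℝ := ‖ξ‖ with hR
  have hR0 : (0:ℝ) < R := lt_of_lt_of_le one_pos hξ
  set M : ℝ := R ^ (γ + α) with hM
  have hM1 : (1:ℝ) ≤ M := by
    have := Real.rpow_le_rpow_of_exponent_le hξ (le_of_lt hs0 : (0:ℝ) ≤ γ + α)
    rwa [Real.rpow_zero] at this
  have hM0 : (0:ℝ) < M := lt_of_lt_of_le one_pos hM1
  have hM2 : (0:ℝ) < M ^ 2 := pow_pos hM0 2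
  have hDM : R ^ (2*(γ + α)) = M ^ 2 := by
    rw [hM, show (2*(γ+α)) = (γ+α)*2 by ring, Real.rpow_mul hR0.le, Real.rpow_two]
  -- rewrite integrand
  have hgf : ∀ τ : ℝ, ENNReal.ofReal (|τ| ^ (1 - 2*H) / (R ^ (2*(γ + α)) + τ ^ 2))
      = (fun t : ℝ => ENNReal.ofReal (t ^ (1 - 2*H) / (M ^ 2 + t ^ 2))) |τ| := by
    intro τ
    simp only [hDM, sq_abs]
  have hs1m : MeasurableSet {x : ℝ | |x| ≤ M} := measurableSet_le measurable_abs measurable_const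
  have hseteq1 : {x : ℝ | |x| ≤ M} ∩ Ici 0 = Icc 0 M := by
    ext x
    simp only [mem_inter_iff, mem_setOf_eq, mem_Ici, mem_Icc]
    constructor
    · rintro ⟨h1, h2⟩; exact ⟨h2, by rwa [abs_of_nonneg h2] at h1⟩
    · rintro ⟨h1, h2⟩; exact ⟨by rwa [abs_of_nonneg h1], h1⟩
  have hseteq2 : {x : ℝ | |x| ≤ M}ᶜ ∩ Ici 0 = Ioi M := by
    ext x
    simp only [mem_inter_iff, mem_compl_iff, mem_setOf_eq, mem_Ici, mem_Ioi, not_le]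
    constructor
    · rintro ⟨h1, h2⟩; rwa [abs_of_nonneg h2] at h1
    · intro h; have hx0 : (0:ℝ) ≤ x := by linarith
      exact ⟨by rwa [abs_of_nonneg hx0], hx0⟩
  have hp1 : ∫⁻ τ in {x : ℝ | |x| ≤ M},
      (fun t : ℝ => ENNReal.ofReal (t ^ (1 - 2*H) / (M ^ 2 + t ^ 2))) |τ| ∂volume
      ≤ ENNReal.ofReal (2/(2-2*H) * M ^ (-(2*H))) := by
    calc ∫⁻ τ in {x : ℝ | |x| ≤ M},
        (fun t : ℝ => ENNReal.ofReal (t ^ (1 - 2*H) / (M ^ 2 + t ^ 2))) |τ| ∂volume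
        ≤ 2 * ∫⁻ t in {x : ℝ | |x| ≤ M} ∩ Ici 0,
            ENNReal.ofReal (t ^ (1 - 2*H) / (M ^ 2 + t ^ 2)) ∂volume :=
          lint_abs_even _ hs1m (fun x hx => by simpa [abs_neg] using hx)
      _ = 2 * ∫⁻ t in Ioc (0:ℝ) M, ENNReal.ofReal (t ^ (1 - 2*H) / (M ^ 2 + t ^ 2)) ∂volume := by
          rw [hseteq1, setLIntegral_congr (Ioc_ae_eq_Icc (a := (0:ℝ)) (b := M)).symm]
      _ ≤ 2 * ∫⁻ t in Ioc (0:ℝ) M, ENNReal.ofReal ((M ^ 2)⁻¹ * t ^ (1 - 2*H)) ∂volume := by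
          refine mul_le_mul_right (setLIntegral_mono (by fun_prop) (fun t ht => ?_)) 2
          refine ENNReal.ofReal_le_ofReal ?_
          rw [inv_mul_eq_div]
          gcongr <;> first
            | exact Real.rpow_nonneg ht.1.le _
            | nlinarith [sq_nonneg t]
      _ = 2 * (ENNReal.ofReal ((M ^ 2)⁻¹)
            * ∫⁻ t in Ioc (0:ℝ) M, ENNReal.ofReal (t ^ (1 - 2*H)) ∂volume) := by
          congr 1
          rw [← lintegral_const_mul' _ _ ENNReal.ofReal_ne_top]
          congr 1
          funext t
          rw [← ENNReal.ofReal_mul (by positivity)]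
      _ = 2 * (ENNReal.ofReal ((M ^ 2)⁻¹)
            * ENNReal.ofReal (M ^ (1 - 2*H + 1) / (1 - 2*H + 1))) := by
          rw [lint_Ioc_rpow hM0.le (by linarith : (-1:ℝ) < 1 - 2*H)]
      _ = ENNReal.ofReal (2 * ((M ^ 2)⁻¹ * (M ^ (1 - 2*H + 1) / (1 - 2*H + 1)))) := by
          rw [ENNReal.ofReal_mul (by norm_num : (0:ℝ) ≤ 2), ENNReal.ofReal_mul (by positivity),
            ENNReal.ofReal_ofNat]
      _ = ENNReal.ofReal (2/(2-2*H) * M ^ (-(2*H))) := by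
          congr 1
          have hM2ne : (M:ℝ)^2 ≠ 0 := hM2.ne'
          have hne : (2:ℝ) - 2*H ≠ 0 := h2H.ne'
          rw [show (1 - 2*H + 1) = -(2*H) + 2 by ring, Real.rpow_add hM0, Real.rpow_two]
          rw [show -(2*H) + 2 = 2 - 2*H by ring]
          field_simp
  have hp2 : ∫⁻ τ in {x : ℝ | |x| ≤ M}ᶜ,
      (fun t : ℝ => ENNReal.ofReal (t ^ (1 - 2*H) / (M ^ 2 + t ^ 2))) |τ| ∂volume
      ≤ ENNReal.ofReal (1/H * M ^ (-(2*H))) := by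
    calc ∫⁻ τ in {x : ℝ | |x| ≤ M}ᶜ,
        (fun t : ℝ => ENNReal.ofReal (t ^ (1 - 2*H) / (M ^ 2 + t ^ 2))) |τ| ∂volume
        ≤ 2 * ∫⁻ t in {x : ℝ | |x| ≤ M}ᶜ ∩ Ici 0,
            ENNReal.ofReal (t ^ (1 - 2*H) / (M ^ 2 + t ^ 2)) ∂volume :=
          lint_abs_even _ hs1m.compl (fun x hx => by simpa [abs_neg] using hx)
      _ = 2 * ∫⁻ t in Ioi M, ENNReal.ofReal (t ^ (1 - 2*H) / (M ^ 2 + t ^ 2)) ∂volume := by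
          rw [hseteq2]
      _ ≤ 2 * ∫⁻ t in Ioi M, ENNReal.ofReal (t ^ (-1 - 2*H)) ∂volume := by
          refine mul_le_mul_right (setLIntegral_mono (by fun_prop) (fun t ht => ?_)) 2
          have ht0 : (0:ℝ) < t := lt_trans hM0 ht
          refine ENNReal.ofReal_le_ofReal ?_
          have heq : t ^ (1-2*H) / t^2 = t ^ (-1-2*H) := by
            rw [show (t:ℝ)^(2:ℕ) = t ^ ((2:ℕ):ℝ) from (Real.rpow_natCast t 2).symm,
              ← Real.rpow_sub ht0]
            congr 1
            push_cast
            ring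
          calc t ^ (1-2*H) / (M ^ 2 + t^2) ≤ t ^ (1-2*H) / t^2 := by
                gcongr
                nlinarith
            _ = t ^ (-1-2*H) := heq
      _ = 2 * ENNReal.ofReal (-M ^ (-1 - 2*H + 1) / (-1 - 2*H + 1)) := by
          rw [lint_Ioi_rpow hM0 (by linarith : (-1 - 2*H:ℝ) < -1)]
      _ = ENNReal.ofReal (2 * (-M ^ (-1 - 2*H + 1) / (-1 - 2*H + 1))) := by
          rw [ENNReal.ofReal_mul (by norm_num : (0:ℝ) ≤ 2), ENNReal.ofReal_ofNat]
      _ = ENNReal.ofReal (1/H * M ^ (-(2*H))) := by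
          congr 1
          have hne : (H:ℝ) ≠ 0 := hH0.ne'
          rw [show (-1 - 2*H + 1) = -(2*H) by ring, neg_div_neg_eq]
          field_simp
  have hMpe : M ^ (-(2*H)) = R ^ (-(2 * (γ + α) * H)) := by
    rw [hM, ← Real.rpow_mul hR0.le]
    congr 1
    ring
  calc ∫⁻ τ : ℝ, ENNReal.ofReal (|τ| ^ (1 - 2*H) / (R ^ (2*(γ + α)) + τ ^ 2)) ∂volume
      = ∫⁻ τ : ℝ, (fun t : ℝ => ENNReal.ofReal (t ^ (1 - 2*H) / (M ^ 2 + t ^ 2))) |τ| ∂volume :=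
        lintegral_congr hgf
    _ = (∫⁻ τ in {x : ℝ | |x| ≤ M},
          (fun t : ℝ => ENNReal.ofReal (t ^ (1 - 2*H) / (M ^ 2 + t ^ 2))) |τ| ∂volume)
        + ∫⁻ τ in {x : ℝ | |x| ≤ M}ᶜ,
          (fun t : ℝ => ENNReal.ofReal (t ^ (1 - 2*H) / (M ^ 2 + t ^ 2))) |τ| ∂volume :=
        (lintegral_add_compl _ hs1m).symm
    _ ≤ ENNReal.ofReal (2/(2-2*H) * M ^ (-(2*H))) + ENNReal.ofReal (1/H * M ^ (-(2*H))) :=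
        add_le_add hp1 hp2
    _ = ENNReal.ofReal ((2/(2-2*H) + 1/H) * M ^ (-(2*H))) := by
        rw [← ENNReal.ofReal_add (by positivity) (by positivity)]
        congr 1
        ring
    _ = ENNReal.ofReal (2 / (2 - 2*H) + 1/H) * ENNReal.ofReal (M ^ (-(2*H))) :=
        ENNReal.ofReal_mul (by positivity)
    _ = ENNReal.ofReal (2 / (2 - 2*H) + 1/H) * ENNReal.ofReal (R ^ (-(2 * (γ + α) * H))) := by
        rw [hMpe]

set_option maxHeartbeats 1000000 in
theorem stmt17 (d : ℕ) (hd : 1 ≤ d) (α γ H β : ℝ)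
    (hα : 0 ≤ α) (hγ : 0 < γ) (hH1 : 1/2 < H) (hH2 : H < 1)
    (hβ0 : 0 < β) (hβ : β < 2 * (α + γ) * H)
    (α₁ α₂ : ℝ) (hα₁def : α₁ = (α + γ) * H - β/2) (hα₁ : 0 < α₁) (hα₁1 : α₁ < 1)
    (hα₂def : α₂ = α₁ / (α + γ))
    (Υ : EuclideanSpace ℝ (Fin d) → ℝ) (hnn : ∀ ξ, 0 ≤ Υ ξ)
    (hscale : ∀ c > (0:ℝ), ∀ ξ : EuclideanSpace ℝ (Fin d), ξ ≠ 0 →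
      Υ (c • ξ) = c ^ (β - d) * Υ ξ)
    (μ : Measure (EuclideanSpace ℝ (Fin d)))
    (hμ : μ = volume.withDensity (fun ξ => ENNReal.ofReal (Υ ξ)))
    (hfin : μ (closedBall 0 1) < ⊤)
    (hsphInt : Integrable
      (fun z : sphere (0 : EuclideanSpace ℝ (Fin d)) 1 => Υ (z : EuclideanSpace ℝ (Fin d)))
      ((volume : Measure (EuclideanSpace ℝ (Fin d))).toSphere))
    (hsphPos : 0 < ∫ z : sphere (0 : EuclideanSpace ℝ (Fin d)) 1,
      Υ (z : EuclideanSpace ℝ (Fin d))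
      ∂((volume : Measure (EuclideanSpace ℝ (Fin d))).toSphere)) :
    IntegrableOn
      (fun p : ℝ × EuclideanSpace ℝ (Fin d) =>
        |p.1| ^ (1 - 2*H) / (‖p.2‖ ^ (2*(γ + α)) + p.1 ^ 2))
      {p : ℝ × EuclideanSpace ℝ (Fin d) | 1 ≤ max (|p.1| ^ α₂) (‖p.2‖ ^ α₁)}
      ((volume : Measure ℝ).prod μ) := by
  have hs0 : 0 < γ + α := by linarith
  have hH0 : 0 < H := by linarith
  have h2H : 0 < 2 - 2*H := by linarith
  haveI : Nonempty (Fin d) := ⟨⟨0, hd⟩⟩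
  haveI : Nontrivial (EuclideanSpace ℝ (Fin d)) := inferInstance
  haveI : SFinite μ := by rw [hμ]; infer_instance
  set pe : ℝ := 2 * (γ + α) * H with hpe
  have hpe0 : 0 < pe := by rw [hpe]; positivity
  have hβpe : β < pe := by
    have h : 2*(α+γ)*H = pe := by rw [hpe]; ring
    linarith [hβ, h.symm.le]
  -- measurability of the integrand
  have hFmeas : Measurable (fun p : ℝ × EuclideanSpace ℝ (Fin d) =>
      |p.1| ^ (1 - 2*H) / (‖p.2‖ ^ (2*(γ + α)) + p.1 ^ 2)) := by
    apply Measurable.div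
    · exact (measurable_fst.abs).pow_const _
    · exact ((measurable_snd.norm).pow_const _).add (measurable_fst.pow_const 2)
  have hFnn : ∀ p : ℝ × EuclideanSpace ℝ (Fin d),
      0 ≤ |p.1| ^ (1 - 2*H) / (‖p.2‖ ^ (2*(γ + α)) + p.1 ^ 2) := fun p =>
    div_nonneg (Real.rpow_nonneg (abs_nonneg _) _)
      (add_nonneg (Real.rpow_nonneg (norm_nonneg _) _) (sq_nonneg _))
  have hball : ∀ R : ℝ, 0 < R →
      μ (closedBall 0 R) = ENNReal.ofReal (R ^ β) * μ (closedBall 0 1) :=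
    priv_hball d hd β hβ0 Υ hnn hscale μ hμ
  have htail : ∫⁻ ξ in {ξ : EuclideanSpace ℝ (Fin d) | 1 ≤ ‖ξ‖},
      ENNReal.ofReal (‖ξ‖ ^ (-pe)) ∂μ < ⊤ :=
    priv_htail d β pe hβ0 hβpe μ hball hfin
  set V1 : ℝ≥0∞ := 2 * ∫⁻ t in Ioi (1:ℝ), ENNReal.ofReal (t ^ (-1 - 2*H)) ∂volume with hV1
  have hV1fin : V1 < ⊤ := by
    rw [hV1, lint_Ioi_rpow one_pos (by linarith : -1 - 2*H < -1)]
    exact ENNReal.mul_lt_top (by norm_num) ENNReal.ofReal_lt_top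
  set G : ℝ × EuclideanSpace ℝ (Fin d) → ℝ≥0∞ := fun p =>
    ENNReal.ofReal (|p.1| ^ (1 - 2*H) / (‖p.2‖ ^ (2*(γ + α)) + p.1 ^ 2)) with hG
  have hGmeas : Measurable G := hFmeas.ennreal_ofReal
  set T1 : Set ℝ := {τ : ℝ | 1 ≤ |τ|} with hT1
  set T2 : Set (EuclideanSpace ℝ (Fin d)) := {ξ | 1 ≤ ‖ξ‖} with hT2
  have hT1m : MeasurableSet T1 := measurableSet_le measurable_const measurable_abs
  have hT2m : MeasurableSet T2 := measurableSet_le measurable_const measurable_norm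
  have hnear : ∀ ξ : EuclideanSpace ℝ (Fin d), ∫⁻ τ in T1, G (τ, ξ) ∂volume ≤ V1 := by
    intro ξ
    simp only [hG, hT1, hV1]
    exact priv_hnear d γ α H hs0 hH0 hH2 ξ
  set C0 : ℝ := 2 / (2 - 2*H) + 1/H with hC0
  have hfar : ∀ ξ : EuclideanSpace ℝ (Fin d), 1 ≤ ‖ξ‖ →
      ∫⁻ τ, G (τ, ξ) ∂volume ≤ ENNReal.ofReal C0 * ENNReal.ofReal (‖ξ‖ ^ (-pe)) := by
    intro ξ hξ
    simp only [hG, hC0, hpe]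
    exact priv_hfar d γ α H hs0 hH0 hH2 h2H ξ hξ
  have hα₂0 : 0 < α₂ := by rw [hα₂def]; exact div_pos hα₁ (by linarith)
  have hSsub : {p : ℝ × EuclideanSpace ℝ (Fin d) | 1 ≤ max (|p.1| ^ α₂) (‖p.2‖ ^ α₁)}
      ⊆ (T1 ×ˢ univ) ∪ (univ ×ˢ T2) := by
    rintro ⟨τ, ξ⟩ hp
    simp only [mem_setOf_eq, le_max_iff] at hp
    rcases hp with h | h
    · left
      refine ⟨?_, mem_univ _⟩
      by_contra hlt
      rw [hT1, mem_setOf_eq, not_le] at hlt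
      exact absurd h (not_le.2 (Real.rpow_lt_one (abs_nonneg τ) hlt hα₂0))
    · right
      refine ⟨mem_univ _, ?_⟩
      by_contra hlt
      rw [hT2, mem_setOf_eq, not_le] at hlt
      exact absurd h (not_le.2 (Real.rpow_lt_one (norm_nonneg ξ) hlt hα₁))
  refine ⟨hFmeas.aestronglyMeasurable, ?_⟩
  rw [hasFiniteIntegral_iff_ofReal (ae_of_all _ hFnn)]
  have hA : ∫⁻ p, G p ∂(((volume : Measure ℝ).prod μ).restrict (T1 ×ˢ univ)) < ⊤ := by
    rw [← Measure.prod_restrict, Measure.restrict_univ, lintegral_prod_symm' _ hGmeas]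
    rw [← lintegral_add_compl (fun ξ => ∫⁻ τ in T1, G (τ, ξ) ∂volume)
      (measurableSet_closedBall : MeasurableSet (closedBall (0:EuclideanSpace ℝ (Fin d)) 1))]
    refine ENNReal.add_lt_top.2 ⟨?_, ?_⟩
    · calc ∫⁻ ξ in closedBall (0:EuclideanSpace ℝ (Fin d)) 1, ∫⁻ τ in T1, G (τ, ξ) ∂volume ∂μ
          ≤ ∫⁻ _ in closedBall (0:EuclideanSpace ℝ (Fin d)) 1, V1 ∂μ :=
            setLIntegral_mono' measurableSet_closedBall (fun ξ _ => hnear ξ)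
        _ = V1 * μ (closedBall 0 1) := setLIntegral_const _ _
        _ < ⊤ := ENNReal.mul_lt_top hV1fin hfin
    · have hsubc : (closedBall (0:EuclideanSpace ℝ (Fin d)) 1)ᶜ ⊆ T2 := by
        intro ξ hξ
        have h : ¬ ‖ξ‖ ≤ 1 := by simpa [mem_closedBall, dist_zero_right] using hξ
        exact le_of_lt (not_le.1 h)
      calc ∫⁻ ξ in (closedBall (0:EuclideanSpace ℝ (Fin d)) 1)ᶜ, ∫⁻ τ in T1, G (τ, ξ) ∂volume ∂μ
          ≤ ∫⁻ ξ in (closedBall (0:EuclideanSpace ℝ (Fin d)) 1)ᶜ,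
              ENNReal.ofReal C0 * ENNReal.ofReal (‖ξ‖ ^ (-pe)) ∂μ := by
            refine setLIntegral_mono (by fun_prop) (fun ξ hξ => ?_)
            exact le_trans (lintegral_mono' Measure.restrict_le_self le_rfl) (hfar ξ (hsubc hξ))
        _ = ENNReal.ofReal C0 * ∫⁻ ξ in (closedBall (0:EuclideanSpace ℝ (Fin d)) 1)ᶜ,
              ENNReal.ofReal (‖ξ‖ ^ (-pe)) ∂μ := lintegral_const_mul' _ _ ENNReal.ofReal_ne_top
        _ ≤ ENNReal.ofReal C0 * ∫⁻ ξ in T2, ENNReal.ofReal (‖ξ‖ ^ (-pe)) ∂μ :=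
            mul_le_mul_right (lintegral_mono_set hsubc) _
        _ < ⊤ := ENNReal.mul_lt_top ENNReal.ofReal_lt_top htail
  have hB : ∫⁻ p, G p ∂(((volume : Measure ℝ).prod μ).restrict (univ ×ˢ T2)) < ⊤ := by
    rw [← Measure.prod_restrict, Measure.restrict_univ, lintegral_prod_symm' _ hGmeas]
    calc ∫⁻ ξ, ∫⁻ τ, G (τ, ξ) ∂volume ∂(μ.restrict T2)
        ≤ ∫⁻ ξ in T2, ENNReal.ofReal C0 * ENNReal.ofReal (‖ξ‖ ^ (-pe)) ∂μ :=
          setLIntegral_mono (by fun_prop) (fun ξ hξ => hfar ξ hξ)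
      _ = ENNReal.ofReal C0 * ∫⁻ ξ in T2, ENNReal.ofReal (‖ξ‖ ^ (-pe)) ∂μ :=
          lintegral_const_mul' _ _ ENNReal.ofReal_ne_top
      _ < ⊤ := ENNReal.mul_lt_top ENNReal.ofReal_lt_top htail
  calc ∫⁻ p, ENNReal.ofReal (|p.1| ^ (1 - 2*H) / (‖p.2‖ ^ (2*(γ + α)) + p.1 ^ 2))
        ∂(((volume : Measure ℝ).prod μ).restrict
          {p : ℝ × EuclideanSpace ℝ (Fin d) | 1 ≤ max (|p.1| ^ α₂) (‖p.2‖ ^ α₁)})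
      ≤ ∫⁻ p, G p ∂(((volume : Measure ℝ).prod μ).restrict ((T1 ×ˢ univ) ∪ (univ ×ˢ T2))) :=
        lintegral_mono' (Measure.restrict_mono hSsub le_rfl) le_rfl
    _ ≤ ∫⁻ p, G p ∂(((volume : Measure ℝ).prod μ).restrict (T1 ×ˢ univ))
          + ∫⁻ p, G p ∂(((volume : Measure ℝ).prod μ).restrict (univ ×ˢ T2)) := by
        refine le_trans (lintegral_mono' (Measure.restrict_union_le _ _) le_rfl) ?_
        rw [lintegral_add_measure]
    _ < ⊤ := ENNReal.add_lt_top.2 ⟨hA, hB⟩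
end
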